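/- arXiv:2503.09740 — 5 statements merged into one kernel-verified Lean document; each statement's English description precedes it below -/
import Mathlib

section
/- Zero average of the pulled-back exact symplectic form: Let U ⊂ ℝ^{2n} be open, a : U → ℝ^{2n} be C¹, and Ω(z) := (Da(z))^⊤ − Da(z). Let K : ℝ^n × ℝ^ℓ → U be C² and ℤ^{n+ℓ}-periodic, and set Ω_L(θ,φ) := (D_θK(θ,φ))^⊤ Ω(K(θ,φ)) D_θK(θ,φ) ∈ ℝ^{n×n}. Then each entry satisfies (Ω_L)_{i,j}(θ,φ) = Σ_{m=1}^{2n} [ ∂/∂θ_i ( a_m(K) ∂K_m/∂θ_j ) − ∂/∂θ_j ( a_m(K) ∂K_m/∂θ_i ) ], and consequently the average of Ω_L over [0,1]^{n+ℓ} is the zero matrix: ∫_{[0,1]^{n+ℓ}} Ω_L(θ,φ) dθ dφ = O_n. -/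
open scoped BigOperators
open Matrix MeasureTheory

noncomputable section

/-- Points of `ℝⁿ × ℝˡ` (the universal cover of the torus `𝕋ⁿ × 𝕋ˡ`). -/
abbrev PtR (n ℓ : ℕ) := (Fin n → ℝ) × (Fin ℓ → ℝ)

/-- `ℤ^{n+ℓ}`-periodicity. -/
def PerR {n ℓ : ℕ} {E : Type*} (f : PtR n ℓ → E) : Prop :=
  ∀ (θ : Fin n → ℝ) (φ : Fin ℓ → ℝ) (k : Fin n → ℤ) (m : Fin ℓ → ℤ),
    f (θ + fun i => (k i : ℝ), φ + fun j => (m j : ℝ)) = f (θ, φ)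

/-- The Lie derivative `ℒ_{ω,α} f = -(Σ ωᵢ ∂f/∂θᵢ + Σ αⱼ ∂f/∂φⱼ)`. -/
def lieR {n ℓ : ℕ} {E : Type*} [NormedAddCommGroup E] [NormedSpace ℝ E]
    (ω : Fin n → ℝ) (α : Fin ℓ → ℝ) (f : PtR n ℓ → E) (x : PtR n ℓ) : E :=
  -((∑ i, ω i • fderiv ℝ f x (Pi.single i 1, 0)) +
    ∑ j, α j • fderiv ℝ f x (0, Pi.single j 1))

/-- Entrywise Lie derivative of a matrix-valued map. -/
def lieRM {n ℓ : ℕ} {I J : Type*} (ω : Fin n → ℝ) (α : Fin ℓ → ℝ)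
    (M : PtR n ℓ → Matrix I J ℝ) (x : PtR n ℓ) : Matrix I J ℝ :=
  Matrix.of fun i j => lieR ω α (fun w => M w i j) x

/-- Jacobian matrix of a self-map of `ℝᵐ`. -/
def rJac {m : ℕ} (a : (Fin m → ℝ) → (Fin m → ℝ)) (z : Fin m → ℝ) :
    Matrix (Fin m) (Fin m) ℝ :=
  Matrix.of fun i j => fderiv ℝ a z (Pi.single j 1) i

/-- Exact symplectic matrix `Ω(z) = (Da(z))ᵀ - Da(z)`. -/
def OmegaR {m : ℕ} (a : (Fin m → ℝ) → (Fin m → ℝ)) (z : Fin m → ℝ) :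
    Matrix (Fin m) (Fin m) ℝ :=
  (rJac a z)ᵀ - rJac a z

/-- Directional derivative `D_zM(z)[v]` of a matrix-valued map. -/
def matDirR {m p q : ℕ} (M : (Fin m → ℝ) → Matrix (Fin p) (Fin q) ℝ)
    (z v : Fin m → ℝ) : Matrix (Fin p) (Fin q) ℝ :=
  Matrix.of fun i j => fderiv ℝ (fun w => M w i j) z v

/-- The gradient `(D_z h)ᵀ` of the Hamiltonian in the phase-space variables. -/
def gradR {m ℓ : ℕ} (h : (Fin m → ℝ) × (Fin ℓ → ℝ) → ℝ) (z : Fin m → ℝ)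
    (φ : Fin ℓ → ℝ) : Fin m → ℝ :=
  fun i => fderiv ℝ (fun w => h (w, φ)) z (Pi.single i 1)

/-- The Hamiltonian vector field `Z_h(z,φ) = Ω(z)⁻¹ (D_z h(z,φ))ᵀ`. -/
def ZhR {m ℓ : ℕ} (a : (Fin m → ℝ) → (Fin m → ℝ))
    (h : (Fin m → ℝ) × (Fin ℓ → ℝ) → ℝ) (z : Fin m → ℝ) (φ : Fin ℓ → ℝ) :
    Fin m → ℝ :=
  (OmegaR a z)⁻¹.mulVec (gradR h z φ)

/-- The Jacobian `D_z Z_h`. -/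
def DzZhR {m ℓ : ℕ} (a : (Fin m → ℝ) → (Fin m → ℝ))
    (h : (Fin m → ℝ) × (Fin ℓ → ℝ) → ℝ) (z : Fin m → ℝ) (φ : Fin ℓ → ℝ) :
    Matrix (Fin m) (Fin m) ℝ :=
  Matrix.of fun i j => fderiv ℝ (fun w => ZhR a h w φ i) z (Pi.single j 1)

/-- `D_θ K` as a matrix-valued map. -/
def DθR {n ℓ m : ℕ} (K : PtR n ℓ → (Fin m → ℝ)) (x : PtR n ℓ) :
    Matrix (Fin m) (Fin n) ℝ :=
  Matrix.of fun p i => fderiv ℝ K x (Pi.single i 1, 0) p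

/-- `D_φ K` as a matrix-valued map. -/
def DφR {n ℓ m : ℕ} (K : PtR n ℓ → (Fin m → ℝ)) (x : PtR n ℓ) :
    Matrix (Fin m) (Fin ℓ) ℝ :=
  Matrix.of fun p j => fderiv ℝ K x (0, Pi.single j 1) p

/-- `J = -Ω⁻¹G`. -/
def JR {m : ℕ} (a : (Fin m → ℝ) → (Fin m → ℝ))
    (G : (Fin m → ℝ) → Matrix (Fin m) (Fin m) ℝ) (z : Fin m → ℝ) :
    Matrix (Fin m) (Fin m) ℝ :=
  -((OmegaR a z)⁻¹ * G z)

/-- `T_h(z,φ) = Ω(z)(D_zZ_h - D_zJ[Z_h]·J⁻¹ - J·D_zZ_h·J⁻¹)`. -/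
def ThR {m ℓ : ℕ} (a : (Fin m → ℝ) → (Fin m → ℝ))
    (G : (Fin m → ℝ) → Matrix (Fin m) (Fin m) ℝ)
    (h : (Fin m → ℝ) × (Fin ℓ → ℝ) → ℝ) (z : Fin m → ℝ) (φ : Fin ℓ → ℝ) :
    Matrix (Fin m) (Fin m) ℝ :=
  OmegaR a z *
    (DzZhR a h z φ - matDirR (JR a G) z (ZhR a h z φ) * (JR a G z)⁻¹
      - JR a G z * DzZhR a h z φ * (JR a G z)⁻¹)


lemma insertNth_eq_add {n : ℕ} (i : Fin (n+1)) (θ' : Fin n → ℝ) (t : ℝ) :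
    i.insertNth (α := fun _ => ℝ) t θ' = i.insertNth (α := fun _ => ℝ) 0 θ' + t • (Pi.single i 1 : Fin (n+1) → ℝ) := by
  refine funext (Fin.succAboveCases i ?_ ?_)
  · simp
  · intro k
    simp [Pi.single_apply, (i.succAbove_ne k), Fin.succAbove_ne]

lemma preim_eq {n : ℕ} (i : Fin (n+1)) :
    (fun p : ℝ × (Fin n → ℝ) => i.insertNth (α := fun _ => ℝ) p.1 p.2) ⁻¹' (Set.Icc 0 1) =
      Set.Icc (0:ℝ) 1 ×ˢ Set.Icc (0 : Fin n → ℝ) 1 := by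
  ext ⟨t, θ'⟩
  simp only [Set.mem_preimage, Set.mem_Icc, Set.mem_prod, Pi.le_def]
  rw [Fin.forall_iff_succAbove (P := fun p => (0:Fin (n+1) → ℝ) p ≤ i.insertNth (α := fun _ => ℝ) t θ' p) i,
      Fin.forall_iff_succAbove (P := fun p => i.insertNth (α := fun _ => ℝ) t θ' p ≤ (1:Fin (n+1) → ℝ) p) i]
  simp only [Fin.insertNth_apply_same, Fin.insertNth_apply_succAbove]
  tauto

lemma cont_insertNth {n : ℕ} (i : Fin (n+1)) :
    Continuous fun p : ℝ × (Fin n → ℝ) => (i.insertNth (α := fun _ => ℝ) p.1 p.2 : Fin (n+1) → ℝ) := by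
  refine continuous_pi ?_
  refine Fin.succAboveCases i ?_ ?_
  · simpa using (continuous_fst : Continuous fun p : ℝ × (Fin n → ℝ) => p.1)
  · intro k
    simpa using ((continuous_apply k).comp'
      (continuous_snd : Continuous fun p : ℝ × (Fin n → ℝ) => p.2))

lemma intPeriodicDeriv {n ℓ : ℕ} (f : PtR n ℓ → ℝ) (hf : ContDiff ℝ 1 f)
    (hper : ∀ (x : PtR n ℓ) (i : Fin n), f (x.1 + Pi.single i 1, x.2) = f x) (i : Fin n) :
    ∫ x in Set.Icc (0 : PtR n ℓ) 1, fderiv ℝ f x (Pi.single i 1, 0) = 0 := by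
  obtain ⟨n, rfl⟩ : ∃ m, n = m + 1 := ⟨n - 1, (Nat.succ_pred_eq_of_pos i.pos).symm⟩
  set g : PtR (n+1) ℓ → ℝ := fun x => fderiv ℝ f x (Pi.single i 1, 0) with hg
  have hfd : Differentiable ℝ f := hf.differentiable one_ne_zero
  have hgc : Continuous g :=
    ((hf.fderiv_right (m := 0) le_rfl).continuous).clm_apply continuous_const
  -- step 1: product split θ/φ
  have h1 : Set.Icc (0 : PtR (n+1) ℓ) 1 =
      Set.Icc (0 : Fin (n+1) → ℝ) 1 ×ˢ Set.Icc (0 : Fin ℓ → ℝ) 1 := Set.Icc_prod_eq 0 1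
  rw [h1]
  have hint : IntegrableOn g (Set.Icc (0 : Fin (n+1) → ℝ) 1 ×ˢ Set.Icc (0 : Fin ℓ → ℝ) 1) :=
    hgc.continuousOn.integrableOn_compact (isCompact_Icc.prod isCompact_Icc)
  have hint' : Integrable g ((volume.restrict (Set.Icc (0 : Fin (n+1) → ℝ) 1)).prod
      (volume.restrict (Set.Icc (0 : Fin ℓ → ℝ) 1))) := by
    rw [Measure.prod_restrict]
    rw [← Measure.volume_eq_prod]
    exact hint
  calc ∫ x in Set.Icc (0 : Fin (n+1) → ℝ) 1 ×ˢ Set.Icc (0 : Fin ℓ → ℝ) 1, g x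
      = ∫ x, g x ∂((volume.restrict (Set.Icc (0 : Fin (n+1) → ℝ) 1)).prod
          (volume.restrict (Set.Icc (0 : Fin ℓ → ℝ) 1))) := by
        rw [Measure.prod_restrict, ← Measure.volume_eq_prod]
    _ = ∫ φ in Set.Icc (0 : Fin ℓ → ℝ) 1, (∫ θ in Set.Icc (0 : Fin (n+1) → ℝ) 1, g (θ, φ)) :=
        integral_prod_symm g hint'
    _ = 0 := by
        have key : ∀ φ : Fin ℓ → ℝ, ∫ θ in Set.Icc (0 : Fin (n+1) → ℝ) 1, g (θ, φ) = 0 := by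
          intro φ
          set e := MeasurableEquiv.piFinSuccAbove (fun _ : Fin (n+1) => ℝ) i with he
          have hmp : MeasurePreserving e.symm volume volume :=
            (volume_preserving_piFinSuccAbove (fun _ : Fin (n+1) => ℝ) i).symm
          have hesymm : ⇑e.symm = fun p : ℝ × (Fin n → ℝ) =>
              i.insertNth (α := fun _ => ℝ) p.1 p.2 := by
            ext p : 1
            simp [he, MeasurableEquiv.piFinSuccAbove, Fin.insertNthEquiv]
          have hpre : e.symm ⁻¹' (Set.Icc (0 : Fin (n+1) → ℝ) 1) =
              Set.Icc (0:ℝ) 1 ×ˢ Set.Icc (0 : Fin n → ℝ) 1 := by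
            rw [hesymm, preim_eq]
          have hstep := hmp.setIntegral_preimage_emb e.symm.measurableEmbedding
              (fun θ => g (θ, φ)) (Set.Icc 0 1)
          rw [← hstep, hpre]
          have hconte : Continuous fun p : ℝ × (Fin n → ℝ) => g (e.symm p, φ) := by
            rw [hesymm]
            exact hgc.comp ((cont_insertNth i).prodMk continuous_const)
          have hI : Integrable (fun p : ℝ × (Fin n → ℝ) => g (e.symm p, φ))
              ((volume.restrict (Set.Icc (0:ℝ) 1)).prod
                (volume.restrict (Set.Icc (0:Fin n → ℝ) 1))) := by
            rw [Measure.prod_restrict, ← Measure.volume_eq_prod]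
            exact hconte.continuousOn.integrableOn_compact (isCompact_Icc.prod isCompact_Icc)
          calc ∫ p in Set.Icc (0:ℝ) 1 ×ˢ Set.Icc (0:Fin n → ℝ) 1, g (e.symm p, φ)
              = ∫ p, g (e.symm p, φ) ∂((volume.restrict (Set.Icc (0:ℝ) 1)).prod
                  (volume.restrict (Set.Icc (0:Fin n → ℝ) 1))) := by
                rw [Measure.prod_restrict, ← Measure.volume_eq_prod]
            _ = ∫ θ' in Set.Icc (0:Fin n → ℝ) 1,
                  (∫ t in Set.Icc (0:ℝ) 1, g (e.symm (t, θ'), φ)) :=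
                integral_prod_symm _ hI
            _ = 0 := by
                have inner : ∀ θ' : Fin n → ℝ,
                    ∫ t in Set.Icc (0:ℝ) 1, g (e.symm (t, θ'), φ) = 0 := by
                  intro θ'
                  set c : PtR (n+1) ℓ := (i.insertNth (α := fun _ => ℝ) 0 θ', φ) with hc
                  set v : PtR (n+1) ℓ := ((Pi.single i 1 : Fin (n+1) → ℝ), (0 : Fin ℓ → ℝ))
                    with hv
                  have hcurve : ∀ t : ℝ,
                      ((i.insertNth (α := fun _ => ℝ) t θ' : Fin (n+1) → ℝ), φ) = c + t • v := by
                    intro t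
                    rw [insertNth_eq_add]
                    simp [hc, hv, Prod.ext_iff]
                  have hgeq : ∀ t : ℝ, g (e.symm (t, θ'), φ) = fderiv ℝ f (c + t • v) v := by
                    intro t
                    rw [hesymm]
                    show fderiv ℝ f ((i.insertNth (α := fun _ => ℝ) t θ' : Fin (n+1) → ℝ), φ)
                        (Pi.single i 1, 0) = _
                    rw [hcurve t]
                  simp only [hgeq]
                  have hF : ∀ t : ℝ, HasDerivAt (fun s : ℝ => f (c + s • v))
                      (fderiv ℝ f (c + t • v) v) t := by
                    intro t
                    exact (hfd (c + t • v)).hasFDerivAt.comp_hasDerivAt t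
                      (by simpa using ((hasDerivAt_id t).smul_const v).const_add c)
                  have hIc : IntervalIntegrable (fun t : ℝ => fderiv ℝ f (c + t • v) v)
                      volume 0 1 := by
                    have : Continuous fun t : ℝ => fderiv ℝ f (c + t • v) v := by
                      have := ((hf.fderiv_right (m := 0) le_rfl).continuous).clm_apply
                        (continuous_const (y := v))
                      exact this.comp (continuous_const.add (continuous_id.smul continuous_const))
                    exact this.intervalIntegrable 0 1
                  rw [MeasureTheory.integral_Icc_eq_integral_Ioc,
                    ← intervalIntegral.integral_of_le zero_le_one,
                    intervalIntegral.integral_eq_sub_of_hasDerivAt (fun t _ => hF t) hIc]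
                  have hcv : c + v = (c.1 + Pi.single i 1, c.2) := by
                    simp [hv, Prod.ext_iff]
                  have hper1 : f (c + (1:ℝ) • v) = f (c + (0:ℝ) • v) := by
                    simp only [one_smul, zero_smul, add_zero]
                    rw [hcv]
                    exact hper c i
                  rw [hper1, sub_self]
                simp [inner]
        simp [key]

/-- **Zero average of the pulled-back exact symplectic form.**
For `a : U → ℝ^{2n}` of class `C¹` with `Ω = (Da)ᵀ - Da`, and `K : ℝⁿ × ℝˡ → U` of class
`C²` and `ℤ^{n+ℓ}`-periodic, the pull-back `Ω_L = (D_θK)ᵀ Ω(K) D_θK` satisfies the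
entrywise divergence identity and has zero average over `[0,1]^{n+ℓ}`. -/
theorem pullback_exact_form_zero_average
    (n ℓ : ℕ) (U : Set (Fin (2 * n) → ℝ)) (hU : IsOpen U)
    (a : (Fin (2 * n) → ℝ) → (Fin (2 * n) → ℝ)) (ha : ContDiffOn ℝ 1 a U)
    (K : PtR n ℓ → (Fin (2 * n) → ℝ)) (hKU : ∀ x, K x ∈ U)
    (hK : ContDiff ℝ 2 K) (hKper : PerR K) :
    let ΩL : PtR n ℓ → Matrix (Fin n) (Fin n) ℝ :=
      fun x => (DθR K x)ᵀ * OmegaR a (K x) * DθR K x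
    (∀ (x : PtR n ℓ) (i j : Fin n),
        ΩL x i j =
          ∑ m : Fin (2 * n),
            (fderiv ℝ (fun y => a (K y) m * fderiv ℝ K y (Pi.single j 1, 0) m) x
                (Pi.single i 1, 0)
             - fderiv ℝ (fun y => a (K y) m * fderiv ℝ K y (Pi.single i 1, 0) m) x
                (Pi.single j 1, 0))) ∧
    (∀ i j : Fin n, (∫ x in Set.Icc (0 : PtR n ℓ) 1, ΩL x i j) = 0) := by
  intro ΩL
  have hKd : Differentiable ℝ K := hK.differentiable two_ne_zero
  have hK1 : ContDiff ℝ 1 (fderiv ℝ K) := hK.fderiv_right (m := 1) (by norm_num)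
  have hBd : Differentiable ℝ (fderiv ℝ K) := hK1.differentiable one_ne_zero
  -- the key product-rule computation
  have key : ∀ (x : PtR n ℓ) (i j : Fin n) (m : Fin (2*n)),
      fderiv ℝ (fun y => a (K y) m * fderiv ℝ K y (Pi.single j 1, 0) m) x (Pi.single i 1, 0)
        = a (K x) m * fderiv ℝ (fderiv ℝ K) x (Pi.single i 1, 0) (Pi.single j 1, 0) m
          + fderiv ℝ K x (Pi.single j 1, 0) m
              * fderiv ℝ a (K x) (fderiv ℝ K x (Pi.single i 1, 0)) m := by
    intro x i j m
    have hAx : HasFDerivAt a (fderiv ℝ a (K x)) (K x) :=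
      ((ha.contDiffAt (hU.mem_nhds (hKU x))).differentiableAt one_ne_zero).hasFDerivAt
    have hcomp : HasFDerivAt (fun y => a (K y))
        ((fderiv ℝ a (K x)).comp (fderiv ℝ K x)) x := hAx.comp x (hKd x).hasFDerivAt
    have h1 : HasFDerivAt (fun y => a (K y) m)
        ((ContinuousLinearMap.proj (R := ℝ) (φ := fun _ : Fin (2*n) => ℝ) m).comp
          ((fderiv ℝ a (K x)).comp (fderiv ℝ K x))) x :=
      (ContinuousLinearMap.proj (R := ℝ) (φ := fun _ : Fin (2*n) => ℝ) m).hasFDerivAt.comp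
        x hcomp
    have hBx : HasFDerivAt (fderiv ℝ K) (fderiv ℝ (fderiv ℝ K) x) x := (hBd x).hasFDerivAt
    have h2 : HasFDerivAt (fun y => fderiv ℝ K y (Pi.single j 1, 0))
        ((fderiv ℝ K x).comp (0 : PtR n ℓ →L[ℝ] PtR n ℓ)
          + (fderiv ℝ (fderiv ℝ K) x).flip (Pi.single j 1, 0)) x :=
      hBx.clm_apply (hasFDerivAt_const _ x)
    have h3 : HasFDerivAt (fun y => fderiv ℝ K y (Pi.single j 1, 0) m)
        ((ContinuousLinearMap.proj (R := ℝ) (φ := fun _ : Fin (2*n) => ℝ) m).comp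
          ((fderiv ℝ K x).comp (0 : PtR n ℓ →L[ℝ] PtR n ℓ)
            + (fderiv ℝ (fderiv ℝ K) x).flip (Pi.single j 1, 0))) x :=
      (ContinuousLinearMap.proj (R := ℝ) (φ := fun _ : Fin (2*n) => ℝ) m).hasFDerivAt.comp
        x h2
    have h4 := h1.fun_mul h3
    rw [h4.fderiv]
    simp [ContinuousLinearMap.add_apply, ContinuousLinearMap.comp_apply,
      ContinuousLinearMap.flip_apply, ContinuousLinearMap.proj_apply,
      ContinuousLinearMap.smul_apply, smul_eq_mul]
    try ring
  -- linearity expansion of the derivative of a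
  have hA : ∀ (x : PtR n ℓ) (w : Fin (2*n) → ℝ) (q : Fin (2*n)),
      fderiv ℝ a (K x) w q = ∑ p, w p * fderiv ℝ a (K x) (Pi.single p 1) q := by
    intro x w q
    conv_lhs => rw [← Finset.univ_sum_single w]
    rw [map_sum]
    rw [Finset.sum_apply]
    refine Finset.sum_congr rfl fun p _ => ?_
    have : (Pi.single p (w p) : Fin (2*n) → ℝ) = w p • (Pi.single p 1 : Fin (2*n) → ℝ) := by
      ext q'
      by_cases h : q' = p <;> simp [Pi.single_apply, h]
    rw [this, (fderiv ℝ a (K x)).map_smul]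
    simp
  -- Part 1
  have part1 : ∀ (x : PtR n ℓ) (i j : Fin n),
      ΩL x i j =
        ∑ m : Fin (2 * n),
          (fderiv ℝ (fun y => a (K y) m * fderiv ℝ K y (Pi.single j 1, 0) m) x
              (Pi.single i 1, 0)
           - fderiv ℝ (fun y => a (K y) m * fderiv ℝ K y (Pi.single i 1, 0) m) x
              (Pi.single j 1, 0)) := by
    intro x i j
    have hsymm : fderiv ℝ (fderiv ℝ K) x (Pi.single j 1, 0) (Pi.single i 1, 0)
        = fderiv ℝ (fderiv ℝ K) x (Pi.single i 1, 0) (Pi.single j 1, 0) :=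
      second_derivative_symmetric (fun y => (hKd y).hasFDerivAt) (hBd x).hasFDerivAt _ _
    set u := fderiv ℝ K x (Pi.single i 1, 0) with hu
    set v := fderiv ℝ K x (Pi.single j 1, 0) with hv
    have hrhs : ∑ m : Fin (2 * n),
          (fderiv ℝ (fun y => a (K y) m * fderiv ℝ K y (Pi.single j 1, 0) m) x
              (Pi.single i 1, 0)
           - fderiv ℝ (fun y => a (K y) m * fderiv ℝ K y (Pi.single i 1, 0) m) x
              (Pi.single j 1, 0))
        = ∑ m, ∑ p, (u p * fderiv ℝ a (K x) (Pi.single p 1) m * v m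
            - v p * fderiv ℝ a (K x) (Pi.single p 1) m * u m) := by
      refine Finset.sum_congr rfl fun m _ => ?_
      rw [key x i j m, key x j i m, hsymm, ← hu, ← hv, hA x u m, hA x v m,
        Finset.mul_sum, Finset.mul_sum, add_sub_add_left_eq_sub, ← Finset.sum_sub_distrib]
      exact Finset.sum_congr rfl fun p _ => by ring
    rw [hrhs]
    show ((DθR K x)ᵀ * OmegaR a (K x) * DθR K x) i j = _
    have hlhs : ((DθR K x)ᵀ * OmegaR a (K x) * DθR K x) i j
        = ∑ q, ∑ p, (u p * (fderiv ℝ a (K x) (Pi.single p 1) q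
              - fderiv ℝ a (K x) (Pi.single q 1) p)) * v q := by
      simp only [Matrix.mul_apply, Matrix.transpose_apply, DθR, OmegaR, rJac,
        Matrix.sub_apply, Matrix.of_apply, Finset.sum_mul, ← hu, ← hv]
    rw [hlhs]
    simp only [mul_sub, sub_mul, Finset.sum_sub_distrib]
    congr 1
    rw [Finset.sum_comm]
    exact Finset.sum_congr rfl fun q _ => Finset.sum_congr rfl fun p _ => by ring
  refine ⟨part1, ?_⟩
  intro i j
  -- the functions whose θ-derivatives appear
  set F : Fin n → PtR n ℓ → ℝ :=
    fun jj y => ∑ m, a (K y) m * fderiv ℝ K y (Pi.single jj 1, 0) m with hF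
  -- smoothness of F jj
  have haK : ContDiff ℝ 1 fun y => a (K y) := ha.comp_contDiff (hK.of_le one_le_two) hKU
  have hterm : ∀ (jj : Fin n) (m : Fin (2*n)),
      ContDiff ℝ 1 (fun y => a (K y) m * fderiv ℝ K y (Pi.single jj 1, 0) m) := by
    intro jj m
    have c1 : ContDiff ℝ 1 (fun y => a (K y) m) :=
      ((ContinuousLinearMap.proj (R := ℝ) (φ := fun _ : Fin (2*n) => ℝ) m).contDiff).comp haK
    have c2 : ContDiff ℝ 1 (fun y => fderiv ℝ K y (Pi.single jj 1, 0) m) := by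
      have e1 : ContDiff ℝ 1 (fun y => fderiv ℝ K y (Pi.single jj 1, 0)) :=
        ((ContinuousLinearMap.apply ℝ (Fin (2*n) → ℝ)
          ((Pi.single jj 1 : Fin n → ℝ), (0 : Fin ℓ → ℝ))).contDiff).comp hK1
      exact ((ContinuousLinearMap.proj (R := ℝ) (φ := fun _ : Fin (2*n) => ℝ) m).contDiff).comp e1
    exact c1.mul c2
  have hFC1 : ∀ jj : Fin n, ContDiff ℝ 1 (F jj) :=
    fun jj => ContDiff.sum fun m _ => hterm jj m
  have hFd : ∀ jj : Fin n, ∀ m : Fin (2*n), ∀ x,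
      DifferentiableAt ℝ (fun y => a (K y) m * fderiv ℝ K y (Pi.single jj 1, 0) m) x :=
    fun jj m x => ((hterm jj m).differentiable one_ne_zero) x
  -- fderiv of F jj is the sum of the fderivs
  have hFder : ∀ (jj : Fin n) (x : PtR n ℓ) (w : PtR n ℓ),
      fderiv ℝ (F jj) x w = ∑ m, fderiv ℝ
        (fun y => a (K y) m * fderiv ℝ K y (Pi.single jj 1, 0) m) x w := by
    intro jj x w
    rw [hF]
    rw [fderiv_fun_sum fun m _ => hFd jj m x]
    simp
  -- periodicity
  have hKshift : ∀ (y : PtR n ℓ) (ii : Fin n), K (y.1 + Pi.single ii 1, y.2) = K y := by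
    intro y ii
    have h1 : (fun p => ((Pi.single ii 1 : Fin n → ℤ) p : ℝ)) = Pi.single ii 1 := by
      funext p; by_cases h : p = ii <;> simp [Pi.single_apply, h]
    have h2 : (fun q => (((0 : Fin ℓ → ℤ) q : ℤ) : ℝ)) = (0 : Fin ℓ → ℝ) := by
      funext q; simp
    have := hKper y.1 y.2 (Pi.single ii 1) 0
    rw [h1, h2, add_zero] at this
    simpa using this
  have hDKshift : ∀ (y : PtR n ℓ) (ii : Fin n),
      fderiv ℝ K (y.1 + Pi.single ii 1, y.2) = fderiv ℝ K y := by
    intro y ii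
    set c : PtR n ℓ := ((Pi.single ii 1 : Fin n → ℝ), (0 : Fin ℓ → ℝ)) with hc
    have hyc : y + c = (y.1 + Pi.single ii 1, y.2) := by
      simp [hc, Prod.ext_iff]
    have hKc : (fun w => K (w + c)) = K := by
      funext w
      have hwc : w + c = (w.1 + Pi.single ii 1, w.2) := by simp [hc, Prod.ext_iff]
      rw [hwc, hKshift w ii]
    have h1 : HasFDerivAt (fun w => K (w + c))
        ((fderiv ℝ K (y + c)).comp (ContinuousLinearMap.id ℝ (PtR n ℓ))) y :=
      (hKd (y + c)).hasFDerivAt.comp y (by simpa using (hasFDerivAt_id y).add_const c)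
    rw [ContinuousLinearMap.comp_id, hKc] at h1
    rw [← hyc, ← h1.fderiv]
  have hFper : ∀ (jj : Fin n) (x : PtR n ℓ) (ii : Fin n),
      F jj (x.1 + Pi.single ii 1, x.2) = F jj x := by
    intro jj x ii
    rw [hF]
    simp only [hKshift x ii, hDKshift x ii]
  -- integrability of the derivative integrands
  have hcontd : ∀ (jj : Fin n) (w : PtR n ℓ),
      Continuous fun x => fderiv ℝ (F jj) x w :=
    fun jj w => (((hFC1 jj).fderiv_right (m := 0) le_rfl).continuous).clm_apply continuous_const
  have hintd : ∀ (jj : Fin n) (w : PtR n ℓ),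
      IntegrableOn (fun x => fderiv ℝ (F jj) x w) (Set.Icc (0 : PtR n ℓ) 1) volume :=
    fun jj w => (hcontd jj w).continuousOn.integrableOn_compact isCompact_Icc
  have hpt : ∀ x : PtR n ℓ, ΩL x i j
      = fderiv ℝ (F j) x (Pi.single i 1, 0) - fderiv ℝ (F i) x (Pi.single j 1, 0) := by
    intro x
    rw [part1 x i j, Finset.sum_sub_distrib, hFder j x, hFder i x]
  calc ∫ x in Set.Icc (0 : PtR n ℓ) 1, ΩL x i j
      = ∫ x in Set.Icc (0 : PtR n ℓ) 1,
          (fderiv ℝ (F j) x (Pi.single i 1, 0) - fderiv ℝ (F i) x (Pi.single j 1, 0)) := by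
        simp only [hpt]
    _ = (∫ x in Set.Icc (0 : PtR n ℓ) 1, fderiv ℝ (F j) x (Pi.single i 1, 0))
        - ∫ x in Set.Icc (0 : PtR n ℓ) 1, fderiv ℝ (F i) x (Pi.single j 1, 0) :=
        integral_sub (hintd j _) (hintd i _)
    _ = 0 - 0 := by
        rw [intPeriodicDeriv (F j) (hFC1 j) (fun x ii => hFper j x ii) i,
          intPeriodicDeriv (F i) (hFC1 i) (fun x ii => hFper i x ii) j]
    _ = 0 := sub_zero 0



end
end

section
/- Zero average of the mixed pullback: Let U ⊂ ℝ^{2n} be open, a : U → ℝ^{2n} be C¹, Ω(z) := (Da(z))^⊤ − Da(z), and let K : ℝ^n × ℝ^ℓ → U be C² and ℤ^{n+ℓ}-periodic. Then the matrix-valued function Ω̌_K(θ,φ) := (D_θK(θ,φ))^⊤ Ω(K(θ,φ)) D_φK(θ,φ) ∈ ℝ^{n×ℓ} has zero average: ∫_{[0,1]^{n+ℓ}} Ω̌_K(θ,φ) dθ dφ = O_{n×ℓ}. -/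
open scoped BigOperators
open Matrix MeasureTheory

noncomputable section

/-! ### Auxiliary machinery -/

section Aux

open Set Pointwise

instance submodule_measurableVAdd {E : Type*} [NormedAddCommGroup E] [NormedSpace ℝ E]
    [MeasurableSpace E] [OpensMeasurableSpace E] [MeasurableAdd E] (L : Submodule ℤ E) :
    MeasurableVAdd L E where
  measurable_const_vadd γ := by
    have : (fun x : E => γ +ᵥ x) = fun x => (γ : E) + x := rfl
    rw [this]; exact measurable_const_add _
  measurable_vadd_const x := by
    have : (fun γ : L => γ +ᵥ x) = fun γ : L => (γ : E) + x := rfl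
    rw [this]
    exact (measurable_subtype_coe).add_const x

instance submodule_vaddCommClass {E : Type*} [AddCommGroup E] [Module ℤ E]
    (L : Submodule ℤ E) : VAddCommClass E L E where
  vadd_comm a b c := by
    change a + ((b : E) + c) = (b : E) + (a + c)
    abel

instance submodule_vaddInvariant {E : Type*} [AddCommGroup E] [Module ℤ E] [MeasurableSpace E]
    (L : Submodule ℤ E) (μ : MeasureTheory.Measure E) [VAddInvariantMeasure E E μ] :
    VAddInvariantMeasure L E μ :=
  ⟨fun γ _s hs => VAddInvariantMeasure.measure_preimage_vadd (γ : E) hs⟩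

instance ptR_isAddLeftInvariant (n ℓ : ℕ) :
    Measure.IsAddLeftInvariant (volume : Measure (PtR n ℓ)) := by
  rw [Measure.volume_eq_prod]; infer_instance

instance ptR_isAddRightInvariant (n ℓ : ℕ) :
    Measure.IsAddRightInvariant (volume : Measure (PtR n ℓ)) := by
  rw [Measure.volume_eq_prod]; infer_instance

variable {n ℓ : ℕ}

/-- The standard basis of `ℝⁿ × ℝˡ`. -/
def bPt (n ℓ : ℕ) : Module.Basis (Fin n ⊕ Fin ℓ) ℝ (PtR n ℓ) :=
  (Pi.basisFun ℝ (Fin n)).prod (Pi.basisFun ℝ (Fin ℓ))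

lemma fd_eq : ZSpan.fundamentalDomain (bPt n ℓ) =
    (univ.pi fun _ : Fin n => Ico (0:ℝ) 1) ×ˢ (univ.pi fun _ : Fin ℓ => Ico (0:ℝ) 1) := by
  ext x
  simp [ZSpan.fundamentalDomain, bPt, Sum.forall, Module.Basis.prod_repr_inl, Module.Basis.prod_repr_inr,
    Pi.basisFun_repr, Set.mem_pi]

lemma fd_ae_eq : ZSpan.fundamentalDomain (bPt n ℓ) =ᵐ[volume] Icc (0 : PtR n ℓ) 1 := by
  rw [fd_eq, Set.Icc_prod_eq]
  have h1 : (univ.pi fun _ : Fin n => Ico (0:ℝ) 1) =ᵐ[volume] Icc (0 : Fin n → ℝ) 1 :=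
    Measure.univ_pi_Ico_ae_eq_Icc
  have h2 : (univ.pi fun _ : Fin ℓ => Ico (0:ℝ) 1) =ᵐ[volume] Icc (0 : Fin ℓ → ℝ) 1 :=
    Measure.univ_pi_Ico_ae_eq_Icc
  have := MeasureTheory.Measure.set_prod_ae_eq (μ := (volume : Measure (Fin n → ℝ)))
    (ν := (volume : Measure (Fin ℓ → ℝ))) h1 h2
  simpa [MeasureTheory.Measure.volume_eq_prod] using this

/-- A `ℤ^{n+ℓ}`-periodic function is invariant under the lattice spanned by `bPt`. -/
lemma per_invariant {E : Type*} (h : PtR n ℓ → E) (hper : PerR h)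
    (c : PtR n ℓ) (hc : c ∈ Submodule.span ℤ (Set.range ⇑(bPt n ℓ))) (x : PtR n ℓ) :
    h (c + x) = h x := by
  have key : ∀ c ∈ Submodule.span ℤ (Set.range ⇑(bPt n ℓ)),
      ∃ (k : Fin n → ℤ) (m : Fin ℓ → ℤ),
        c = ((fun i => (k i : ℝ)), (fun j => (m j : ℝ))) := by
    intro c hc
    induction hc using Submodule.span_induction with
    | mem v hv =>
        obtain ⟨s, rfl⟩ := hv
        cases s with
        | inl i =>
            refine ⟨Pi.single i 1, 0, ?_⟩
            simp [bPt, Module.Basis.prod_apply, Pi.basisFun_apply]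
            constructor
            · funext i'
              by_cases hi : i' = i <;> simp [Pi.single_apply, hi]
            · funext j; simp
        | inr j =>
            refine ⟨0, Pi.single j 1, ?_⟩
            simp [bPt, Module.Basis.prod_apply, Pi.basisFun_apply]
            constructor
            · funext i'; simp
            · funext j'
              by_cases hj : j' = j <;> simp [Pi.single_apply, hj]
    | zero => exact ⟨0, 0, by refine Prod.ext ?_ ?_ <;> (funext; simp)⟩
    | add u v _ _ hu hv =>
        obtain ⟨k1, m1, rfl⟩ := hu
        obtain ⟨k2, m2, rfl⟩ := hv
        exact ⟨k1 + k2, m1 + m2, by simp [Prod.ext_iff]; constructor <;> (funext; simp)⟩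
    | smul z v _ hv =>
        obtain ⟨k, m, rfl⟩ := hv
        refine ⟨z • k, z • m, ?_⟩
        simp [Prod.ext_iff, Prod.smul_def]
        constructor <;> (funext; simp)
  obtain ⟨k, m, rfl⟩ := key c hc
  have := hper x.1 x.2 k m
  rw [add_comm]; exact this

/-- Integrals over the unit cube of lattice-periodic functions are shift invariant. -/
lemma shift_integral_eq (h : PtR n ℓ → ℝ)
    (hinv : ∀ c ∈ Submodule.span ℤ (Set.range ⇑(bPt n ℓ)), ∀ x, h (c + x) = h x)
    (c : PtR n ℓ) :
    ∫ x in Icc (0 : PtR n ℓ) 1, h (x + c) = ∫ x in Icc (0 : PtR n ℓ) 1, h x := by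
  set L := Submodule.span ℤ (Set.range ⇑(bPt n ℓ)) with hL
  set F := ZSpan.fundamentalDomain (bPt n ℓ) with hFdef
  have hF : IsAddFundamentalDomain L F volume := ZSpan.isAddFundamentalDomain (bPt n ℓ) volume
  have hF' : IsAddFundamentalDomain L ((-c) +ᵥ F) volume := hF.vadd_of_comm (-c)
  have hrc : (volume : Measure (PtR n ℓ)).restrict (Icc 0 1) = volume.restrict F :=
    (Measure.restrict_congr_set fd_ae_eq).symm
  have hinv' : ∀ (γ : L) (x : PtR n ℓ), h ((γ +ᵥ x) + c) = h (x + c) := by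
    intro γ x
    have : (γ +ᵥ x) + c = (γ : PtR n ℓ) + (x + c) := by
      change ((γ : PtR n ℓ) + x) + c = _; abel
    rw [this, hinv γ γ.2 (x + c)]
  calc ∫ x in Icc (0 : PtR n ℓ) 1, h (x + c)
      = ∫ x in F, h (x + c) := by rw [hrc]
    _ = ∫ x in (-c) +ᵥ F, h (x + c) := hF.setIntegral_eq hF' hinv'
    _ = ∫ y in F, h y := by
        have hmp : MeasurePreserving (fun x : PtR n ℓ => x + c) volume volume :=
          measurePreserving_add_right volume c
        have hemb : MeasurableEmbedding (fun x : PtR n ℓ => x + c) :=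
          (MeasurableEquiv.addRight c).measurableEmbedding
        have himg : (fun x : PtR n ℓ => x + c) '' ((-c) +ᵥ F) = F := by
          ext y
          simp only [Set.mem_image, Set.mem_vadd_set]
          constructor
          · rintro ⟨x, ⟨z, hz, rfl⟩, rfl⟩
            simpa [vadd_eq_add, add_assoc] using hz
          · intro hy
            exact ⟨-c + y, ⟨y, hy, rfl⟩, by abel⟩
        exact (hmp.setIntegral_image_emb hemb h ((-c) +ᵥ F)).symm.trans (by rw [himg])
    _ = ∫ x in Icc (0 : PtR n ℓ) 1, h x := by rw [hrc]

lemma fderiv_shift {E F : Type*} [NormedAddCommGroup E] [NormedSpace ℝ E]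
    [NormedAddCommGroup F] [NormedSpace ℝ F]
    (g : E → F) (c x : E) (hg : DifferentiableAt ℝ g (c + x)) :
    fderiv ℝ (fun y => g (c + y)) x = fderiv ℝ g (c + x) := by
  have h1 : HasFDerivAt (fun y : E => c + y) (ContinuousLinearMap.id ℝ E) x := by
    simpa using (hasFDerivAt_id x).const_add c
  have := (hg.hasFDerivAt.comp x h1)
  simpa [Function.comp_def] using this.fderiv

/-- Key lemma: the average over the unit cube of a lattice-direction derivative of a
`C¹` lattice-periodic function vanishes. -/
lemma integral_fderiv_periodic_zero (g : PtR n ℓ → ℝ) (hg : ContDiff ℝ 1 g)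
    (hinv : ∀ c ∈ Submodule.span ℤ (Set.range ⇑(bPt n ℓ)), ∀ x, g (c + x) = g x)
    (v : PtR n ℓ) (hv : v ∈ Submodule.span ℤ (Set.range ⇑(bPt n ℓ))) :
    ∫ x in Icc (0 : PtR n ℓ) 1, fderiv ℝ g x v = 0 := by
  set D : PtR n ℓ → ℝ := fun x => fderiv ℝ g x v with hD
  have hDc : Continuous D := by
    have h1 : Continuous (fderiv ℝ g) := hg.continuous_fderiv one_ne_zero
    exact h1.clm_apply continuous_const
  have hDinv : ∀ c ∈ Submodule.span ℤ (Set.range ⇑(bPt n ℓ)), ∀ x, D (c + x) = D x := by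
    intro c hc x
    have h1 : (fun y => g (c + y)) = g := funext fun y => hinv c hc y
    have := fderiv_shift g c x (hg.differentiable one_ne_zero _)
    rw [h1] at this
    simp only [hD, ← this]
  have hinner : ∀ x : PtR n ℓ, (∫ t in (0:ℝ)..1, D (x + t • v)) = 0 := by
    intro x
    have hderiv : ∀ t ∈ Set.uIcc (0:ℝ) 1, HasDerivAt (fun s : ℝ => g (x + s • v))
        (D (x + t • v)) t := by
      intro t _
      have hline : HasDerivAt (fun s : ℝ => x + s • v) v t := by
        simpa using ((hasDerivAt_id t).smul_const v).const_add x
      have := (hg.differentiable one_ne_zero (x + t • v)).hasFDerivAt.comp_hasDerivAt t hline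
      simpa [hD, Function.comp_def] using this
    have hcont : IntervalIntegrable (fun t : ℝ => D (x + t • v)) volume 0 1 :=
      (hDc.comp (by continuity)).intervalIntegrable 0 1
    have := intervalIntegral.integral_eq_sub_of_hasDerivAt hderiv hcont
    rw [this]
    have : x + (1:ℝ) • v = v + x := by rw [one_smul]; abel
    rw [this, hinv v hv x]
    simp
  set A : ℝ := ∫ x in Icc (0 : PtR n ℓ) 1, D x with hA
  have hshift : ∀ t : ℝ, (∫ x in Icc (0 : PtR n ℓ) 1, D (x + t • v)) = A := fun t =>
    shift_integral_eq D hDinv (t • v)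
  have hInt : Integrable (fun p : ℝ × PtR n ℓ => D (p.2 + p.1 • v))
      ((volume.restrict (Ioc (0:ℝ) 1)).prod (volume.restrict (Icc (0 : PtR n ℓ) 1))) := by
    rw [Measure.prod_restrict]
    have hcont : Continuous fun p : ℝ × PtR n ℓ => D (p.2 + p.1 • v) := by fun_prop
    exact (hcont.continuousOn.integrableOn_compact
      (isCompact_Icc.prod isCompact_Icc)).mono_set (Set.prod_mono_left Ioc_subset_Icc_self)
  have hswap := integral_integral_swap (f := fun (t : ℝ) (x : PtR n ℓ) => D (x + t • v))
      (μ := volume.restrict (Ioc (0:ℝ) 1)) (ν := volume.restrict (Icc (0 : PtR n ℓ) 1)) hInt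
  have hL : (∫ t in Ioc (0:ℝ) 1, ∫ x in Icc (0 : PtR n ℓ) 1, D (x + t • v)) = A := by
    simp only [hshift]
    rw [setIntegral_const, Real.volume_real_Ioc]
    norm_num
  have hR : (∫ x in Icc (0 : PtR n ℓ) 1, ∫ t in Ioc (0:ℝ) 1, D (x + t • v)) = 0 := by
    have : ∀ x : PtR n ℓ, (∫ t in Ioc (0:ℝ) 1, D (x + t • v)) = 0 := by
      intro x
      have := hinner x
      rwa [intervalIntegral.integral_of_le zero_le_one] at this
    simp only [this, integral_zero]
  rw [hswap, hR] at hL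
  exact hL.symm

/-- Expansion of a continuous linear map on a pi type over the standard basis. -/
lemma clm_pi_expand {m m' : ℕ} (L : (Fin m → ℝ) →L[ℝ] (Fin m' → ℝ)) (u : Fin m → ℝ) :
    L u = ∑ q, u q • L (Pi.single q 1) := by
  have hu : u = ∑ q, u q • (Pi.single q 1 : Fin m → ℝ) := by
    funext r
    simp [Finset.sum_apply, Pi.single_apply]
  conv_lhs => rw [hu]
  rw [map_sum]
  simp

lemma pointwise_ident
    (U : Set (Fin (2*n) → ℝ)) (hU : IsOpen U)
    (a : (Fin (2*n) → ℝ) → (Fin (2*n) → ℝ)) (ha : ContDiffOn ℝ 1 a U)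
    (K : PtR n ℓ → (Fin (2*n) → ℝ)) (hKU : ∀ x, K x ∈ U) (hK : ContDiff ℝ 2 K)
    (i : Fin n) (j : Fin ℓ) (x : PtR n ℓ) :
    ((DθR K x)ᵀ * OmegaR a (K x) * DφR K x) i j
      = fderiv ℝ (fun y => ∑ p, a (K y) p * fderiv ℝ K y ((0 : Fin n → ℝ), Pi.single j 1) p) x
          (Pi.single i 1, (0 : Fin ℓ → ℝ))
      - fderiv ℝ (fun y => ∑ p, a (K y) p * fderiv ℝ K y (Pi.single i 1, (0 : Fin ℓ → ℝ)) p) x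
          ((0 : Fin n → ℝ), Pi.single j 1) := by
  set w₁ : PtR n ℓ := (Pi.single i 1, (0 : Fin ℓ → ℝ)) with hw₁
  set w₂ : PtR n ℓ := ((0 : Fin n → ℝ), Pi.single j 1) with hw₂
  set z := K x with hz
  -- differentiability facts
  have haK : DifferentiableAt ℝ a z :=
    ((ha.contDiffAt (hU.mem_nhds (hKU x))).differentiableAt one_ne_zero)
  have hKd : Differentiable ℝ K := hK.differentiable two_ne_zero
  have hdK1 : ContDiff ℝ 1 (fderiv ℝ K) := hK.fderiv_right (le_refl 2)
  have hDf : DifferentiableAt ℝ (fderiv ℝ K) x := (hdK1.differentiable one_ne_zero) x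
  have haKC : ContDiffAt ℝ 1 (fun y => a (K y)) x :=
    (ha.contDiffAt (hU.mem_nhds (hKU x))).comp x (hK.contDiffAt.of_le one_le_two)
  -- component derivative of a ∘ K
  have hcomp : ∀ (p : Fin (2*n)) (u : PtR n ℓ),
      fderiv ℝ (fun y => a (K y) p) x u = fderiv ℝ a z (fderiv ℝ K x u) p := by
    intro p u
    have hchain : HasFDerivAt (fun y => a (K y))
        ((fderiv ℝ a z).comp (fderiv ℝ K x)) x :=
      haK.hasFDerivAt.comp x (hKd x).hasFDerivAt
    have hev : HasFDerivAt (fun y => a (K y) p)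
        ((ContinuousLinearMap.proj (R := ℝ) (φ := fun _ : Fin (2*n) => ℝ) p).comp
          ((fderiv ℝ a z).comp (fderiv ℝ K x))) x :=
      (ContinuousLinearMap.proj (R := ℝ) (φ := fun _ : Fin (2*n) => ℝ)
        p).hasFDerivAt.comp x hchain
    rw [hev.fderiv]
    rfl
  have hcompDiff : ∀ (p : Fin (2*n)), DifferentiableAt ℝ (fun y => a (K y) p) x := by
    intro p
    have h1 : DifferentiableAt ℝ (fun y => a (K y)) x := haKC.differentiableAt one_ne_zero
    exact (differentiableAt_pi.mp h1) p
  -- second derivative terms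
  have hsnd : ∀ (wa wb : PtR n ℓ) (p : Fin (2*n)),
      fderiv ℝ (fun y => fderiv ℝ K y wb p) x wa
        = fderiv ℝ (fderiv ℝ K) x wa wb p := by
    intro wa wb p
    have hev : HasFDerivAt (fun y => fderiv ℝ K y wb p)
        (((ContinuousLinearMap.proj (R := ℝ) (φ := fun _ : Fin (2*n) => ℝ) p).comp
          (ContinuousLinearMap.apply ℝ (Fin (2*n) → ℝ) wb)).comp
            (fderiv ℝ (fderiv ℝ K) x)) x :=
      (((ContinuousLinearMap.proj (R := ℝ) (φ := fun _ : Fin (2*n) => ℝ) p).comp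
          (ContinuousLinearMap.apply ℝ (Fin (2*n) → ℝ) wb))).hasFDerivAt.comp x hDf.hasFDerivAt
    rw [hev.fderiv]
    rfl
  have hsndDiff : ∀ (wb : PtR n ℓ) (p : Fin (2*n)),
      DifferentiableAt ℝ (fun y => fderiv ℝ K y wb p) x := by
    intro wb p
    have h1 : DifferentiableAt ℝ (fun y => fderiv ℝ K y wb) x := by
      exact ((hdK1.clm_apply contDiff_const).differentiable one_ne_zero) x
    exact (differentiableAt_pi.mp h1) p
  have hsym : ∀ v w, fderiv ℝ (fderiv ℝ K) x v w = fderiv ℝ (fderiv ℝ K) x w v :=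
    hK.contDiffAt.isSymmSndFDerivAt (by simp [minSmoothness_of_isRCLikeNormedField])
  -- derivative of the sums
  have hsum : ∀ (wa wb : PtR n ℓ),
      fderiv ℝ (fun y => ∑ p, a (K y) p * fderiv ℝ K y wb p) x wa
        = ∑ p, (a z p * fderiv ℝ (fderiv ℝ K) x wa wb p
            + fderiv ℝ K x wb p * fderiv ℝ a z (fderiv ℝ K x wa) p) := by
    intro wa wb
    have hdiff : ∀ p ∈ Finset.univ, DifferentiableAt ℝ
        (fun y => a (K y) p * fderiv ℝ K y wb p) x := fun p _ =>
      (hcompDiff p).mul (hsndDiff wb p)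
    rw [fderiv_fun_sum hdiff, ContinuousLinearMap.sum_apply]
    refine Finset.sum_congr rfl fun p _ => ?_
    rw [fderiv_fun_mul (hcompDiff p) (hsndDiff wb p)]
    simp only [ContinuousLinearMap.add_apply, ContinuousLinearMap.smul_apply, smul_eq_mul]
    rw [hcomp p wa, hsnd wa wb p]
  rw [hsum w₁ w₂, hsum w₂ w₁]
  -- matrix side
  have hmat : ((DθR K x)ᵀ * OmegaR a (K x) * DφR K x) i j
      = ∑ q, ∑ p, fderiv ℝ K x w₁ p *
          (fderiv ℝ a z (Pi.single p 1) q - fderiv ℝ a z (Pi.single q 1) p)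
          * fderiv ℝ K x w₂ q := by
    rw [Matrix.mul_apply]
    refine Finset.sum_congr rfl fun q _ => ?_
    rw [Matrix.mul_apply, Finset.sum_mul]
    refine Finset.sum_congr rfl fun p _ => ?_
    simp [DθR, DφR, OmegaR, rJac, hz, hw₁, hw₂, Matrix.transpose_apply, Matrix.sub_apply]
  rw [hmat]
  set Kθ : Fin (2*n) → ℝ := fderiv ℝ K x w₁ with hKθ
  set Kφ : Fin (2*n) → ℝ := fderiv ℝ K x w₂ with hKφ
  set Da : Fin (2*n) → Fin (2*n) → ℝ := fun p q => fderiv ℝ a z (Pi.single q 1) p with hDa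
  have hexp1 : ∀ p, fderiv ℝ a z Kθ p = ∑ q, Kθ q * Da p q := by
    intro p
    rw [hKθ, clm_pi_expand (fderiv ℝ a z) (fderiv ℝ K x w₁)]
    simp [hDa, Finset.sum_apply]
  have hexp2 : ∀ p, fderiv ℝ a z Kφ p = ∑ q, Kφ q * Da p q := by
    intro p
    rw [hKφ, clm_pi_expand (fderiv ℝ a z) (fderiv ℝ K x w₂)]
    simp [hDa, Finset.sum_apply]
  simp only [hexp1, hexp2, hsym w₂ w₁]
  rw [← Finset.sum_sub_distrib]
  have hRHS : ∀ p, (a z p * fderiv ℝ (fderiv ℝ K) x w₁ w₂ p + Kφ p * ∑ q, Kθ q * Da p q)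
      - (a z p * fderiv ℝ (fderiv ℝ K) x w₁ w₂ p + Kθ p * ∑ q, Kφ q * Da p q)
      = ∑ q, (Kφ p * (Kθ q * Da p q) - Kθ p * (Kφ q * Da p q)) := by
    intro p
    rw [Finset.sum_sub_distrib, ← Finset.mul_sum, ← Finset.mul_sum]
    ring
  simp only [hRHS]
  have hL : (∑ q, ∑ p, Kθ p * (fderiv ℝ a z (Pi.single p 1) q
          - fderiv ℝ a z (Pi.single q 1) p) * Kφ q)
      = (∑ q, ∑ p, Kθ p * fderiv ℝ a z (Pi.single p 1) q * Kφ q)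
        - (∑ q, ∑ p, Kθ p * fderiv ℝ a z (Pi.single q 1) p * Kφ q) := by
    rw [← Finset.sum_sub_distrib]
    refine Finset.sum_congr rfl fun q _ => ?_
    rw [← Finset.sum_sub_distrib]
    refine Finset.sum_congr rfl fun p _ => ?_
    ring
  have hR : (∑ p, ∑ q, (Kφ p * (Kθ q * Da p q) - Kθ p * (Kφ q * Da p q)))
      = (∑ p, ∑ q, Kφ p * (Kθ q * Da p q)) - (∑ p, ∑ q, Kθ p * (Kφ q * Da p q)) := by
    rw [← Finset.sum_sub_distrib]
    refine Finset.sum_congr rfl fun p _ => ?_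
    rw [← Finset.sum_sub_distrib]
  rw [hL, hR]
  congr 1
  · refine Finset.sum_congr rfl fun q _ => ?_
    refine Finset.sum_congr rfl fun p _ => ?_
    simp only [hDa]
    ring
  · rw [Finset.sum_comm]
    refine Finset.sum_congr rfl fun q _ => ?_
    refine Finset.sum_congr rfl fun p _ => ?_
    simp only [hDa]
    ring

end Aux

/-- **Zero average of the mixed pullback.**
For `a : U → ℝ^{2n}` of class `C¹` with `Ω = (Da)ᵀ - Da`, and `K : ℝⁿ × ℝˡ → U` of class
`C²` and `ℤ^{n+ℓ}`-periodic, the matrix `Ω̌_K = (D_θK)ᵀ Ω(K) D_φK` has zero average over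
`[0,1]^{n+ℓ}`. -/
theorem mixed_pullback_zero_average
    (n ℓ : ℕ) (U : Set (Fin (2 * n) → ℝ)) (hU : IsOpen U)
    (a : (Fin (2 * n) → ℝ) → (Fin (2 * n) → ℝ)) (ha : ContDiffOn ℝ 1 a U)
    (K : PtR n ℓ → (Fin (2 * n) → ℝ)) (hKU : ∀ x, K x ∈ U)
    (hK : ContDiff ℝ 2 K) (hKper : PerR K) :
    let ΩcheckK : PtR n ℓ → Matrix (Fin n) (Fin ℓ) ℝ :=
      fun x => (DθR K x)ᵀ * OmegaR a (K x) * DφR K x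
    ∀ (i : Fin n) (j : Fin ℓ),
      (∫ x in Set.Icc (0 : PtR n ℓ) 1, ΩcheckK x i j) = 0 := by
  intro ΩcheckK i j
  classical
  have hident := pointwise_ident U hU a ha K hKU hK i j
  set w₁ : PtR n ℓ := (Pi.single i 1, (0 : Fin ℓ → ℝ)) with hw₁
  set w₂ : PtR n ℓ := ((0 : Fin n → ℝ), Pi.single j 1) with hw₂
  set g₁ : PtR n ℓ → ℝ :=
    fun y => ∑ p, a (K y) p * fderiv ℝ K y ((0 : Fin n → ℝ), Pi.single j 1) p with hg₁def
  set g₂ : PtR n ℓ → ℝ :=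
    fun y => ∑ p, a (K y) p * fderiv ℝ K y (Pi.single i 1, (0 : Fin ℓ → ℝ)) p with hg₂def
  -- smoothness of g₁, g₂
  have hfdK : ContDiff ℝ 1 (fderiv ℝ K) := hK.fderiv_right (le_refl 2)
  have hfdKw : ∀ w : PtR n ℓ, ContDiff ℝ 1 (fun y => fderiv ℝ K y w) := fun w =>
    hfdK.clm_apply contDiff_const
  have hgC : ∀ w : PtR n ℓ, ContDiff ℝ 1 (fun y => ∑ p, a (K y) p * fderiv ℝ K y w p) := by
    intro w
    rw [contDiff_iff_contDiffAt]
    intro x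
    have haKC : ContDiffAt ℝ 1 (fun y => a (K y)) x :=
      (ha.contDiffAt (hU.mem_nhds (hKU x))).comp x (hK.contDiffAt.of_le one_le_two)
    exact ContDiffAt.sum fun p _ =>
      ((contDiffAt_pi.mp haKC) p).mul ((contDiff_pi.mp (hfdKw w)) p).contDiffAt
  have hg₁C : ContDiff ℝ 1 g₁ := hgC _
  have hg₂C : ContDiff ℝ 1 g₂ := hgC _
  -- lattice invariance of K and its derivative
  have hKinv : ∀ c ∈ Submodule.span ℤ (Set.range ⇑(bPt n ℓ)), ∀ x, K (c + x) = K x :=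
    fun c hc x => per_invariant K hKper c hc x
  have hfdKinv : ∀ c ∈ Submodule.span ℤ (Set.range ⇑(bPt n ℓ)), ∀ x,
      fderiv ℝ K (c + x) = fderiv ℝ K x := by
    intro c hc x
    have h1 : (fun y => K (c + y)) = K := funext fun y => hKinv c hc y
    have := fderiv_shift K c x (hK.differentiable two_ne_zero _)
    rw [h1] at this
    exact this.symm
  have hginv : ∀ w : PtR n ℓ, ∀ c ∈ Submodule.span ℤ (Set.range ⇑(bPt n ℓ)), ∀ x,
      (fun y => ∑ p, a (K y) p * fderiv ℝ K y w p) (c + x)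
        = (fun y => ∑ p, a (K y) p * fderiv ℝ K y w p) x := by
    intro w c hc x
    simp only [hKinv c hc x, hfdKinv c hc x]
  -- lattice membership of the directions
  have hw₁mem : w₁ ∈ Submodule.span ℤ (Set.range ⇑(bPt n ℓ)) := by
    apply Submodule.subset_span
    refine ⟨Sum.inl i, ?_⟩
    simp [bPt, Module.Basis.prod_apply, Pi.basisFun_apply, hw₁]
  have hw₂mem : w₂ ∈ Submodule.span ℤ (Set.range ⇑(bPt n ℓ)) := by
    apply Submodule.subset_span
    refine ⟨Sum.inr j, ?_⟩
    simp [bPt, Module.Basis.prod_apply, Pi.basisFun_apply, hw₂]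
  -- the two vanishing averages
  have hz₁ : ∫ x in Set.Icc (0 : PtR n ℓ) 1, fderiv ℝ g₁ x w₁ = 0 :=
    integral_fderiv_periodic_zero g₁ hg₁C (hginv _) w₁ hw₁mem
  have hz₂ : ∫ x in Set.Icc (0 : PtR n ℓ) 1, fderiv ℝ g₂ x w₂ = 0 :=
    integral_fderiv_periodic_zero g₂ hg₂C (hginv _) w₂ hw₂mem
  -- integrability of the two derivative terms on the cube
  have hi₁ : IntegrableOn (fun x => fderiv ℝ g₁ x w₁) (Set.Icc (0 : PtR n ℓ) 1) volume := by
    have : Continuous fun x => fderiv ℝ g₁ x w₁ :=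
      (hg₁C.continuous_fderiv one_ne_zero).clm_apply continuous_const
    exact this.continuousOn.integrableOn_compact isCompact_Icc
  have hi₂ : IntegrableOn (fun x => fderiv ℝ g₂ x w₂) (Set.Icc (0 : PtR n ℓ) 1) volume := by
    have : Continuous fun x => fderiv ℝ g₂ x w₂ :=
      (hg₂C.continuous_fderiv one_ne_zero).clm_apply continuous_const
    exact this.continuousOn.integrableOn_compact isCompact_Icc
  calc (∫ x in Set.Icc (0 : PtR n ℓ) 1, ΩcheckK x i j)
      = ∫ x in Set.Icc (0 : PtR n ℓ) 1, (fderiv ℝ g₁ x w₁ - fderiv ℝ g₂ x w₂) := by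
        refine setIntegral_congr_fun measurableSet_Icc fun x _ => ?_
        exact hident x
    _ = (∫ x in Set.Icc (0 : PtR n ℓ) 1, fderiv ℝ g₁ x w₁)
        - ∫ x in Set.Icc (0 : PtR n ℓ) 1, fderiv ℝ g₂ x w₂ := integral_sub hi₁ hi₂
    _ = 0 := by rw [hz₁, hz₂, sub_zero]

end
end

section
/- Zero average of the tangential projection of the invariance error (part of Lemma 4.3): Let U ⊂ ℝ^{2n} be open, a : U → ℝ^{2n} be C¹ with Ω(z) := (Da(z))^⊤ − Da(z) invertible, h : U × ℝ^ℓ → ℝ be C¹ and ℤ^ℓ-periodic in φ, and Z_h(z,φ) := Ω(z)^{-1}(D_z h(z,φ))^⊤. Let K : ℝ^n × ℝ^ℓ → U be C² and ℤ^{n+ℓ}-periodic, (ω,α) ∈ ℝ^n × ℝ^ℓ, and let E(θ,φ) := Z_h(K(θ,φ),φ) + ℒ_{ω,α}K(θ,φ). Then ∫_{[0,1]^{n+ℓ}} (D_θK(θ,φ))^⊤ Ω(K(θ,φ)) E(θ,φ) dθ dφ = 0_n. -/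
open scoped BigOperators
open Matrix MeasureTheory

noncomputable section

/-- Integral over the unit cube of a coordinate partial derivative of a periodic `C¹`
function vanishes. -/
lemma cube_deriv_zero {m : ℕ} (g : (Fin (m + 1) → ℝ) → ℝ) (hg : ContDiff ℝ 1 g)
    (hper : ∀ (x : Fin (m + 1) → ℝ) (d : Fin (m + 1)), g (x + Pi.single d 1) = g x)
    (d : Fin (m + 1)) :
    ∫ x in Set.Icc (0 : Fin (m + 1) → ℝ) 1, fderiv ℝ g x (Pi.single d 1) = 0 := by
  have hgd : Differentiable ℝ g := hg.differentiable one_ne_zero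
  have hcont : Continuous fun x => fderiv ℝ g x (Pi.single d 1) :=
    ((hg.fderiv_right (m := 0) le_rfl).continuous).clm_apply continuous_const
  set f : Fin (m + 1) → (Fin (m + 1) → ℝ) → ℝ := fun i x => if i = d then g x else 0 with hf
  set f' : Fin (m + 1) → (Fin (m + 1) → ℝ) → (Fin (m + 1) → ℝ) →L[ℝ] ℝ :=
    fun i x => if i = d then fderiv ℝ g x else 0 with hf'
  have key := integral_divergence_of_hasFDerivAt_off_countable' (a := 0) (b := 1)
    zero_le_one f f' ∅ Set.countable_empty
    (fun i => by
      by_cases hid : i = d <;> simp [hf, hid, continuousOn_const, (hg.continuous).continuousOn])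
    (fun x _ i => by
      by_cases hid : i = d
      · simpa [hf, hf', hid] using (hgd x).hasFDerivAt
      · simpa [hf, hf', hid] using hasFDerivAt_const (0 : ℝ) x)
    (by
      have : (fun x => ∑ i, f' i x (Pi.single i 1)) =
          fun x => fderiv ℝ g x (Pi.single d 1) := by
        funext x
        rw [Finset.sum_eq_single d]
        · simp [hf']
        · intro b _ hb; simp [hf', hb]
        · simp
      rw [this]
      exact hcont.continuousOn.integrableOn_compact isCompact_Icc)
  have hsum : (fun x => ∑ i, f' i x (Pi.single i 1)) =
      fun x => fderiv ℝ g x (Pi.single d 1) := by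
    funext x
    rw [Finset.sum_eq_single d]
    · simp [hf']
    · intro b _ hb; simp [hf', hb]
    · simp
  rw [hsum] at key
  rw [key]
  apply Finset.sum_eq_zero
  intro i _
  by_cases hid : i = d
  · subst hid
    have hins : ∀ x : Fin m → ℝ, i.insertNth (1 : ℝ) x =
        ((i.insertNth (0 : ℝ) x : Fin (m + 1) → ℝ) + Pi.single i 1) := by
      intro x
      funext j
      rcases eq_or_ne j i with rfl | hj
      · simp
      · obtain ⟨k, rfl⟩ := Fin.exists_succAbove_eq hj
        simp [Fin.insertNth_apply_succAbove, Pi.single_eq_of_ne (Fin.succAbove_ne i k)]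
    have : ∀ x : Fin m → ℝ, f i (i.insertNth ((1 : Fin (m+1) → ℝ) i) x) =
        f i (i.insertNth ((0 : Fin (m+1) → ℝ) i) x) := by
      intro x
      simp only [hf, if_pos rfl, Pi.one_apply, Pi.zero_apply, hins x, hper]
    simp only [this, sub_self]
  · simp [hf, hid]

lemma intSingle_cast {N : ℕ} (d : Fin N) :
    (fun p => (((Pi.single d 1 : Fin N → ℤ) p : ℤ) : ℝ)) = Pi.single d 1 := by
  funext p
  by_cases hp : p = d
  · subst hp; simp
  · simp [Pi.single_eq_of_ne hp]

lemma intZero_cast {N : ℕ} : (fun p : Fin N => (((0 : Fin N → ℤ) p : ℤ) : ℝ)) = 0 := by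
  funext p; simp

lemma torus_deriv_theta_zero {n ℓ : ℕ} (g : PtR n ℓ → ℝ) (hg : ContDiff ℝ 1 g)
    (hper : PerR g) (i : Fin n) :
    ∫ x in Set.Icc (0 : PtR n ℓ) 1, fderiv ℝ g x (Pi.single i 1, 0) = 0 := by
  cases n with
  | zero => exact i.elim0
  | succ m =>
  set F : PtR (m + 1) ℓ → ℝ := fun x => fderiv ℝ g x (Pi.single i 1, 0) with hF
  have hFc : Continuous F :=
    ((hg.fderiv_right (m := 0) le_rfl).continuous).clm_apply continuous_const
  have hIcc : Set.Icc (0 : PtR (m + 1) ℓ) 1 =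
      Set.Icc (0 : Fin (m + 1) → ℝ) 1 ×ˢ Set.Icc (0 : Fin ℓ → ℝ) 1 := Set.Icc_prod_eq _ _
  have hInt : Integrable F
      ((volume.restrict (Set.Icc (0 : Fin (m + 1) → ℝ) 1)).prod
        (volume.restrict (Set.Icc (0 : Fin ℓ → ℝ) 1))) := by
    rw [Measure.prod_restrict, ← Measure.volume_eq_prod, ← hIcc]
    exact hFc.continuousOn.integrableOn_compact isCompact_Icc
  have hmeas : (volume : Measure (PtR (m + 1) ℓ)).restrict (Set.Icc 0 1) =
      ((volume.restrict (Set.Icc (0 : Fin (m + 1) → ℝ) 1)).prod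
        (volume.restrict (Set.Icc (0 : Fin ℓ → ℝ) 1))) := by
    rw [Measure.prod_restrict, ← Measure.volume_eq_prod, ← hIcc]
  rw [hmeas, integral_prod_symm F hInt]
  have hinner : ∀ φ : Fin ℓ → ℝ,
      (∫ θ in Set.Icc (0 : Fin (m + 1) → ℝ) 1, F (θ, φ)) = 0 := by
    intro φ
    have hgφ : ContDiff ℝ 1 fun θ : Fin (m + 1) → ℝ => g (θ, φ) :=
      hg.comp (contDiff_id.prodMk contDiff_const)
    have hder : ∀ θ, fderiv ℝ (fun θ : Fin (m + 1) → ℝ => g (θ, φ)) θ (Pi.single i 1)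
        = F (θ, φ) := by
      intro θ
      have h1 : HasFDerivAt (fun θ : Fin (m + 1) → ℝ => (θ, φ))
          ((ContinuousLinearMap.id ℝ (Fin (m + 1) → ℝ)).prod 0) θ :=
        (hasFDerivAt_id θ).prodMk (hasFDerivAt_const φ θ)
      have h2 := ((hg.differentiable one_ne_zero (θ, φ)).hasFDerivAt.comp θ h1).fderiv
      have h3 : (fun θ : Fin (m + 1) → ℝ => g (θ, φ)) = g ∘ (fun θ => (θ, φ)) := rfl
      rw [h3, h2]; simp [hF]
    have hperφ : ∀ (θ : Fin (m + 1) → ℝ) (d : Fin (m + 1)),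
        g (θ + Pi.single d 1, φ) = g (θ, φ) := by
      intro θ d
      have := hper θ φ (Pi.single d 1) 0
      rwa [intSingle_cast, intZero_cast, add_zero] at this
    calc (∫ θ in Set.Icc (0 : Fin (m + 1) → ℝ) 1, F (θ, φ))
        = ∫ θ in Set.Icc (0 : Fin (m + 1) → ℝ) 1,
            fderiv ℝ (fun θ : Fin (m + 1) → ℝ => g (θ, φ)) θ (Pi.single i 1) := by
          exact (setIntegral_congr_fun measurableSet_Icc fun θ _ => (hder θ).symm).symm ▸ rfl
      _ = 0 := cube_deriv_zero _ hgφ hperφ i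
  calc (∫ φ in Set.Icc (0 : Fin ℓ → ℝ) 1, ∫ θ in Set.Icc (0 : Fin (m + 1) → ℝ) 1, F (θ, φ))
      = ∫ φ in Set.Icc (0 : Fin ℓ → ℝ) 1, (0 : ℝ) :=
        setIntegral_congr_fun measurableSet_Icc fun φ _ => hinner φ
    _ = 0 := by simp

lemma torus_deriv_phi_zero {n ℓ : ℕ} (g : PtR n ℓ → ℝ) (hg : ContDiff ℝ 1 g)
    (hper : PerR g) (j : Fin ℓ) :
    ∫ x in Set.Icc (0 : PtR n ℓ) 1, fderiv ℝ g x (0, Pi.single j 1) = 0 := by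
  cases ℓ with
  | zero => exact j.elim0
  | succ m =>
  set F : PtR n (m + 1) → ℝ := fun x => fderiv ℝ g x (0, Pi.single j 1) with hF
  have hFc : Continuous F :=
    ((hg.fderiv_right (m := 0) le_rfl).continuous).clm_apply continuous_const
  have hIcc : Set.Icc (0 : PtR n (m + 1)) 1 =
      Set.Icc (0 : Fin n → ℝ) 1 ×ˢ Set.Icc (0 : Fin (m + 1) → ℝ) 1 := Set.Icc_prod_eq _ _
  have hInt : Integrable F
      ((volume.restrict (Set.Icc (0 : Fin n → ℝ) 1)).prod
        (volume.restrict (Set.Icc (0 : Fin (m + 1) → ℝ) 1))) := by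
    rw [Measure.prod_restrict, ← Measure.volume_eq_prod, ← hIcc]
    exact hFc.continuousOn.integrableOn_compact isCompact_Icc
  have hmeas : (volume : Measure (PtR n (m + 1))).restrict (Set.Icc 0 1) =
      ((volume.restrict (Set.Icc (0 : Fin n → ℝ) 1)).prod
        (volume.restrict (Set.Icc (0 : Fin (m + 1) → ℝ) 1))) := by
    rw [Measure.prod_restrict, ← Measure.volume_eq_prod, ← hIcc]
  rw [hmeas, integral_prod F hInt]
  have hinner : ∀ θ : Fin n → ℝ,
      (∫ φ in Set.Icc (0 : Fin (m + 1) → ℝ) 1, F (θ, φ)) = 0 := by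
    intro θ
    have hgθ : ContDiff ℝ 1 fun φ : Fin (m + 1) → ℝ => g (θ, φ) :=
      hg.comp (contDiff_const.prodMk contDiff_id)
    have hder : ∀ φ, fderiv ℝ (fun φ : Fin (m + 1) → ℝ => g (θ, φ)) φ (Pi.single j 1)
        = F (θ, φ) := by
      intro φ
      have h1 : HasFDerivAt (fun φ : Fin (m + 1) → ℝ => (θ, φ))
          ((0 : (Fin (m + 1) → ℝ) →L[ℝ] (Fin n → ℝ)).prod (ContinuousLinearMap.id ℝ _)) φ :=
        (hasFDerivAt_const θ φ).prodMk (hasFDerivAt_id φ)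
      have h2 := ((hg.differentiable one_ne_zero (θ, φ)).hasFDerivAt.comp φ h1).fderiv
      have h3 : (fun φ : Fin (m + 1) → ℝ => g (θ, φ)) = g ∘ Prod.mk θ := rfl
      rw [h3, h2]; simp [hF]
    have hperθ : ∀ (φ : Fin (m + 1) → ℝ) (d : Fin (m + 1)),
        g (θ, φ + Pi.single d 1) = g (θ, φ) := by
      intro φ d
      have := hper θ φ 0 (Pi.single d 1)
      rwa [intSingle_cast, intZero_cast, add_zero] at this
    calc (∫ φ in Set.Icc (0 : Fin (m + 1) → ℝ) 1, F (θ, φ))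
        = ∫ φ in Set.Icc (0 : Fin (m + 1) → ℝ) 1,
            fderiv ℝ (fun φ : Fin (m + 1) → ℝ => g (θ, φ)) φ (Pi.single j 1) :=
          setIntegral_congr_fun measurableSet_Icc fun φ _ => (hder φ).symm
      _ = 0 := cube_deriv_zero _ hgθ hperθ j
  calc (∫ θ in Set.Icc (0 : Fin n → ℝ) 1, ∫ φ in Set.Icc (0 : Fin (m + 1) → ℝ) 1, F (θ, φ))
      = ∫ θ in Set.Icc (0 : Fin n → ℝ) 1, (0 : ℝ) :=
        setIntegral_congr_fun measurableSet_Icc fun θ _ => hinner θ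
    _ = 0 := by simp

variable {X : Type*} [NormedAddCommGroup X] [NormedSpace ℝ X]

/-- Linearity of a CLM on a pi space in terms of the standard basis. -/
lemma clm_apply_pi {M : ℕ} {G : Type*} [NormedAddCommGroup G] [NormedSpace ℝ G]
    (T : (Fin M → ℝ) →L[ℝ] G) (u : Fin M → ℝ) :
    T u = ∑ p, u p • T (Pi.single p 1) := by
  have hu : u = ∑ p, u p • (Pi.single p 1 : Fin M → ℝ) := by
    funext q
    simp [Pi.single_apply, Finset.sum_ite_eq' (Finset.univ : Finset (Fin M)) q]
  conv_lhs => rw [hu]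
  rw [map_sum]
  simp

lemma aK_hasFDerivAt {M : ℕ} {U : Set (Fin M → ℝ)} (hU : IsOpen U)
    {a : (Fin M → ℝ) → Fin M → ℝ} (ha : ContDiffOn ℝ 1 a U)
    {K : X → Fin M → ℝ} (hK : ContDiff ℝ 2 K) (hKU : ∀ x, K x ∈ U) (x : X) :
    HasFDerivAt (fun y => a (K y)) ((fderiv ℝ a (K x)).comp (fderiv ℝ K x)) x := by
  have had : DifferentiableAt ℝ a (K x) :=
    (ha.differentiableOn one_ne_zero).differentiableAt (hU.mem_nhds (hKU x))
  exact had.hasFDerivAt.comp x (hK.differentiable two_ne_zero x).hasFDerivAt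

/-- Product rule for `Q v y = a (K y) ⬝ᵥ fderiv K y v`. -/
lemma Q_fderiv_apply {M : ℕ} {U : Set (Fin M → ℝ)} (hU : IsOpen U)
    {a : (Fin M → ℝ) → Fin M → ℝ} (ha : ContDiffOn ℝ 1 a U)
    {K : X → Fin M → ℝ} (hK : ContDiff ℝ 2 K) (hKU : ∀ x, K x ∈ U) (v w x : X) :
    fderiv ℝ (fun y => a (K y) ⬝ᵥ fderiv ℝ K y v) x w =
      fderiv ℝ a (K x) (fderiv ℝ K x w) ⬝ᵥ fderiv ℝ K x v
        + a (K x) ⬝ᵥ (fderiv ℝ (fderiv ℝ K) x w v) := by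
  have hA := aK_hasFDerivAt hU ha hK hKU x
  have hK' : HasFDerivAt (fderiv ℝ K) (fderiv ℝ (fderiv ℝ K) x) x :=
    (((hK.fderiv_right (m := 1) le_rfl).differentiable one_ne_zero) x).hasFDerivAt
  have hAp : ∀ p : Fin M, HasFDerivAt (fun y => a (K y) p)
      ((ContinuousLinearMap.proj p).comp ((fderiv ℝ a (K x)).comp (fderiv ℝ K x))) x :=
    fun p => (ContinuousLinearMap.proj (R := ℝ) (φ := fun _ : Fin M => ℝ) p).hasFDerivAt.comp x hA
  have hBp : ∀ p : Fin M, HasFDerivAt (fun y => fderiv ℝ K y v p)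
      (((ContinuousLinearMap.proj p).comp
        (ContinuousLinearMap.apply ℝ (Fin M → ℝ) v)).comp (fderiv ℝ (fderiv ℝ K) x)) x :=
    fun p => ((ContinuousLinearMap.proj (R := ℝ) p).comp
        (ContinuousLinearMap.apply ℝ (Fin M → ℝ) v)).hasFDerivAt.comp x hK'
  have hQ : HasFDerivAt (fun y => a (K y) ⬝ᵥ fderiv ℝ K y v)
      (∑ p, ((a (K x) p) • (((ContinuousLinearMap.proj p).comp
          (ContinuousLinearMap.apply ℝ (Fin M → ℝ) v)).comp (fderiv ℝ (fderiv ℝ K) x))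
        + (fderiv ℝ K x v p) • ((ContinuousLinearMap.proj p).comp
          ((fderiv ℝ a (K x)).comp (fderiv ℝ K x))))) x := by
    have : (fun y => a (K y) ⬝ᵥ fderiv ℝ K y v) =
        fun y => ∑ p, (a (K y) p) * (fderiv ℝ K y v p) := by
      funext y; simp [dotProduct]
    rw [this]
    exact HasFDerivAt.fun_sum fun p _ => (hAp p).fun_mul (hBp p)
  rw [hQ.fderiv]
  simp only [ContinuousLinearMap.coe_sum', Finset.sum_apply, ContinuousLinearMap.add_apply,
    ContinuousLinearMap.coe_smul', Pi.smul_apply, ContinuousLinearMap.coe_comp',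
    Function.comp_apply, ContinuousLinearMap.proj_apply, ContinuousLinearMap.apply_apply,
    smul_eq_mul, dotProduct]
  rw [Finset.sum_add_distrib, add_comm]
  congr 1 <;> exact Finset.sum_congr rfl fun p _ => by ring

/-- Antisymmetrized derivative of `Q`. -/
lemma Q_antisym {M : ℕ} {U : Set (Fin M → ℝ)} (hU : IsOpen U)
    {a : (Fin M → ℝ) → Fin M → ℝ} (ha : ContDiffOn ℝ 1 a U)
    {K : X → Fin M → ℝ} (hK : ContDiff ℝ 2 K) (hKU : ∀ x, K x ∈ U) (v w x : X) :
    fderiv ℝ (fun y => a (K y) ⬝ᵥ fderiv ℝ K y w) x v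
      - fderiv ℝ (fun y => a (K y) ⬝ᵥ fderiv ℝ K y v) x w =
      fderiv ℝ a (K x) (fderiv ℝ K x v) ⬝ᵥ fderiv ℝ K x w
        - fderiv ℝ a (K x) (fderiv ℝ K x w) ⬝ᵥ fderiv ℝ K x v := by
  rw [Q_fderiv_apply hU ha hK hKU w v x, Q_fderiv_apply hU ha hK hKU v w x]
  have hsymm : fderiv ℝ (fderiv ℝ K) x v w = fderiv ℝ (fderiv ℝ K) x w v :=
    (hK.contDiffAt.isSymmSndFDerivAt (by simp)) v w
  rw [hsymm]
  ring

/-- `u ⬝ᵥ Ω w = Da(u) ⬝ᵥ w - Da(w) ⬝ᵥ u`. -/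
lemma omega_bilinear {M : ℕ} (a : (Fin M → ℝ) → Fin M → ℝ) (z : Fin M → ℝ)
    (u w : Fin M → ℝ) :
    u ⬝ᵥ (OmegaR a z).mulVec w =
      fderiv ℝ a z u ⬝ᵥ w - fderiv ℝ a z w ⬝ᵥ u := by
  have h1 : ∀ (q : Fin M) (c : Fin M → ℝ), fderiv ℝ a z c q = ∑ p, c p * fderiv ℝ a z (Pi.single p 1) q := by
    intro q c
    rw [clm_apply_pi (fderiv ℝ a z) c]
    simp
  simp only [OmegaR, rJac, Matrix.mulVec, dotProduct, Matrix.sub_apply, Matrix.transpose_apply,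
    Matrix.of_apply, sub_mul, mul_sub, Finset.sum_sub_distrib]
  congr 1
  · simp_rw [Finset.mul_sum]
    rw [Finset.sum_comm]
    refine Finset.sum_congr rfl fun q _ => ?_
    rw [h1 q u, Finset.sum_mul]
    exact Finset.sum_congr rfl fun p _ => by ring
  · refine Finset.sum_congr rfl fun p _ => ?_
    rw [h1 p w, Finset.mul_sum, Finset.sum_mul]
    refine Finset.sum_congr rfl fun q _ => by ring
/-- `u ⬝ᵥ grad h = D_z h (u)`. -/
lemma grad_dot {M ℓ : ℕ} (h : (Fin M → ℝ) × (Fin ℓ → ℝ) → ℝ) (z : Fin M → ℝ)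
    (φ : Fin ℓ → ℝ) (u : Fin M → ℝ) :
    u ⬝ᵥ gradR h z φ = fderiv ℝ (fun w => h (w, φ)) z u := by
  rw [clm_apply_pi (fderiv ℝ (fun w => h (w, φ)) z) u]
  simp [gradR, dotProduct]

lemma omega_mulVec_Zh {M ℓ : ℕ} (a : (Fin M → ℝ) → Fin M → ℝ)
    (h : (Fin M → ℝ) × (Fin ℓ → ℝ) → ℝ) (z : Fin M → ℝ) (φ : Fin ℓ → ℝ)
    (hdet : (OmegaR a z).det ≠ 0) :
    (OmegaR a z).mulVec (ZhR a h z φ) = gradR h z φ := by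
  rw [ZhR, Matrix.mulVec_mulVec, Matrix.mul_nonsing_inv _ (Ne.isUnit hdet), Matrix.one_mulVec]

lemma tmul_mulVec {M N : ℕ} (A : Matrix (Fin M) (Fin N) ℝ) (B : Matrix (Fin M) (Fin M) ℝ)
    (E : Fin M → ℝ) (i : Fin N) :
    ((Aᵀ * B).mulVec E) i = (fun p => A p i) ⬝ᵥ (B.mulVec E) := by
  simp only [Matrix.mulVec, dotProduct, Matrix.mul_apply, Matrix.transpose_apply,
    Finset.sum_mul, Finset.mul_sum]
  rw [Finset.sum_comm]
  exact Finset.sum_congr rfl fun p _ => Finset.sum_congr rfl fun q _ => by ring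

/-- The full derivative of a periodic function is periodic. -/
lemma fderiv_perR {n ℓ : ℕ} {F : Type*} [NormedAddCommGroup F] [NormedSpace ℝ F]
    {f : PtR n ℓ → F} (hf : Differentiable ℝ f) (hper : PerR f) :
    ∀ (θ : Fin n → ℝ) (φ : Fin ℓ → ℝ) (k : Fin n → ℤ) (m : Fin ℓ → ℤ),
      fderiv ℝ f (θ + fun i => (k i : ℝ), φ + fun j => (m j : ℝ)) = fderiv ℝ f (θ, φ) := by
  intro θ φ k m
  set c : PtR n ℓ := (fun i => (k i : ℝ), fun j => (m j : ℝ)) with hc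
  have hfc : (fun y : PtR n ℓ => f (y + c)) = f := by
    funext y
    have := hper y.1 y.2 k m
    exact this
  have h1 : ∀ x : PtR n ℓ, fderiv ℝ (fun y => f (y + c)) x = fderiv ℝ f (x + c) := by
    intro x
    have hin : HasFDerivAt (fun y : PtR n ℓ => y + c) (ContinuousLinearMap.id ℝ (PtR n ℓ)) x := by
      simpa using (hasFDerivAt_id x).add_const c
    have := ((hf (x + c)).hasFDerivAt.comp x hin).fderiv
    exact this
  have h2 := h1 (θ, φ)
  rw [hfc] at h2
  have h3 : (θ, φ) + c = ((θ + fun i => (k i : ℝ), φ + fun j => (m j : ℝ)) : PtR n ℓ) := rfl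
  rw [h3] at h2
  exact h2.symm
/-- Dot product with a finite sum. -/
lemma dot_sum {M : ℕ} {ι : Type*} (s : Finset ι) (u : Fin M → ℝ) (g : ι → Fin M → ℝ) :
    u ⬝ᵥ ((∑ p ∈ s, g p : Fin M → ℝ)) = ∑ p ∈ s, u ⬝ᵥ g p := by
  simp only [dotProduct, Finset.sum_apply, Finset.mul_sum]
  exact Finset.sum_comm

/-- `mulVec` of a finite sum. -/
lemma mulVec_finsum {M : ℕ} {ι : Type*} (s : Finset ι) (A : Matrix (Fin M) (Fin M) ℝ)
    (g : ι → Fin M → ℝ) :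
    A.mulVec (∑ p ∈ s, g p) = ∑ p ∈ s, A.mulVec (g p) := by
  funext q
  simp only [Matrix.mulVec, dotProduct, Finset.sum_apply, Finset.mul_sum]
  exact Finset.sum_comm

/-- **Zero average of the tangential projection of the invariance error**
(part of Lemma 4.3). With `Ω = (Da)ᵀ - Da` invertible, `Z_h = Ω⁻¹(D_z h)ᵀ`,
`K` a `C²` periodic torus into `U` and `E = Z_h(K,φ) + ℒ_{ω,α}K`, one has
`⟨(D_θK)ᵀ Ω(K) E⟩ = 0`. -/
theorem tangential_projection_error_zero_average
    (n ℓ : ℕ) (U : Set (Fin (2 * n) → ℝ)) (hU : IsOpen U)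
    (a : (Fin (2 * n) → ℝ) → (Fin (2 * n) → ℝ)) (ha : ContDiffOn ℝ 1 a U)
    (hΩinv : ∀ z ∈ U, (OmegaR a z).det ≠ 0)
    (h : (Fin (2 * n) → ℝ) × (Fin ℓ → ℝ) → ℝ)
    (hh : ContDiffOn ℝ 1 h (U ×ˢ (Set.univ : Set (Fin ℓ → ℝ))))
    (hhper : ∀ (z : Fin (2 * n) → ℝ) (φ : Fin ℓ → ℝ) (m : Fin ℓ → ℤ),
      h (z, φ + fun j => (m j : ℝ)) = h (z, φ))
    (K : PtR n ℓ → (Fin (2 * n) → ℝ)) (hKU : ∀ x, K x ∈ U)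
    (hK : ContDiff ℝ 2 K) (hKper : PerR K)
    (ω : Fin n → ℝ) (α : Fin ℓ → ℝ) :
    let E : PtR n ℓ → (Fin (2 * n) → ℝ) :=
      fun x => ZhR a h (K x) x.2 + lieR ω α K x
    ∀ i : Fin n,
      (∫ x in Set.Icc (0 : PtR n ℓ) 1,
        ((DθR K x)ᵀ * OmegaR a (K x)).mulVec (E x) i) = 0 := by
  intro E i
  classical
  -- basic regularity facts
  have hKd : Differentiable ℝ K := hK.differentiable two_ne_zero
  have hK'c : ContDiff ℝ 1 (fderiv ℝ K) := hK.fderiv_right (m := 1) le_rfl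
  have haK : ContDiff ℝ 1 (fun x : PtR n ℓ => a (K x)) := by
    rw [contDiff_iff_contDiffAt]
    intro x
    exact (ha.contDiffAt (hU.mem_nhds (hKU x))).comp x (hK.of_le one_le_two).contDiffAt
  have hQc : ∀ v : PtR n ℓ,
      ContDiff ℝ 1 (fun y : PtR n ℓ => a (K y) ⬝ᵥ fderiv ℝ K y v) := by
    intro v
    have h1 : (fun y : PtR n ℓ => a (K y) ⬝ᵥ fderiv ℝ K y v) =
        fun y => ∑ p, (a (K y) p) * (fderiv ℝ K y v p) := by
      funext y; simp [dotProduct]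
    rw [h1]
    exact ContDiff.sum fun p _ =>
      (contDiff_pi.1 haK p).mul (contDiff_pi.1 (hK'c.clm_apply contDiff_const) p)
  have hPc : ContDiff ℝ 1 (fun y : PtR n ℓ => h (K y, y.2)) := by
    rw [contDiff_iff_contDiffAt]
    intro x
    have hhx : ContDiffAt ℝ 1 h (K x, x.2) :=
      hh.contDiffAt ((hU.prod isOpen_univ).mem_nhds ⟨hKU x, trivial⟩)
    exact hhx.comp x ((hK.of_le one_le_two).prodMk contDiff_snd).contDiffAt
  have hSc : ContDiff ℝ 1 (fun y : PtR n ℓ => h (K y, y.2)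
      - (∑ p, ω p * (a (K y) ⬝ᵥ fderiv ℝ K y (Pi.single p 1, (0 : Fin ℓ → ℝ))))
      - ∑ q, α q * (a (K y) ⬝ᵥ fderiv ℝ K y ((0 : Fin n → ℝ), Pi.single q 1))) :=
    (hPc.sub (ContDiff.sum fun p _ =>
        contDiff_const.mul (hQc (Pi.single p 1, (0 : Fin ℓ → ℝ))))).sub
      (ContDiff.sum fun q _ =>
        contDiff_const.mul (hQc ((0 : Fin n → ℝ), Pi.single q 1)))
  -- periodicity facts
  have hK'per := fderiv_perR hKd hKper
  have hQper : ∀ v : PtR n ℓ, PerR (fun y : PtR n ℓ => a (K y) ⬝ᵥ fderiv ℝ K y v) := by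
    intro v θ φ k m
    show a (K (θ + fun i => (k i : ℝ), φ + fun j => (m j : ℝ)))
        ⬝ᵥ fderiv ℝ K (θ + fun i => (k i : ℝ), φ + fun j => (m j : ℝ)) v
      = a (K (θ, φ)) ⬝ᵥ fderiv ℝ K (θ, φ) v
    rw [hKper θ φ k m, hK'per θ φ k m]
  have hPper : PerR (fun y : PtR n ℓ => h (K y, y.2)) := by
    intro θ φ k m
    show h (K (θ + fun i => (k i : ℝ), φ + fun j => (m j : ℝ)), φ + fun j => (m j : ℝ))
      = h (K (θ, φ), φ)
    rw [hKper θ φ k m]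
    exact hhper _ φ m
  have hSper : PerR (fun y : PtR n ℓ => h (K y, y.2)
      - (∑ p, ω p * (a (K y) ⬝ᵥ fderiv ℝ K y (Pi.single p 1, (0 : Fin ℓ → ℝ))))
      - ∑ q, α q * (a (K y) ⬝ᵥ fderiv ℝ K y ((0 : Fin n → ℝ), Pi.single q 1))) := by
    intro θ φ k m
    simp only
    rw [hKper θ φ k m, hK'per θ φ k m, hhper (K (θ, φ)) φ m]
  -- derivative of S
  have hQd : ∀ (v : PtR n ℓ) (x : PtR n ℓ),
      HasFDerivAt (fun y : PtR n ℓ => a (K y) ⬝ᵥ fderiv ℝ K y v)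
        (fderiv ℝ (fun y : PtR n ℓ => a (K y) ⬝ᵥ fderiv ℝ K y v) x) x :=
    fun v x => ((hQc v).differentiable one_ne_zero x).hasFDerivAt
  have hPd : ∀ x : PtR n ℓ, HasFDerivAt (fun y : PtR n ℓ => h (K y, y.2))
      (fderiv ℝ (fun y : PtR n ℓ => h (K y, y.2)) x) x :=
    fun x => (hPc.differentiable one_ne_zero x).hasFDerivAt
  have hSd : ∀ x : PtR n ℓ, HasFDerivAt (fun y : PtR n ℓ => h (K y, y.2)
      - (∑ p, ω p * (a (K y) ⬝ᵥ fderiv ℝ K y (Pi.single p 1, (0 : Fin ℓ → ℝ))))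
      - ∑ q, α q * (a (K y) ⬝ᵥ fderiv ℝ K y ((0 : Fin n → ℝ), Pi.single q 1)))
      (fderiv ℝ (fun y : PtR n ℓ => h (K y, y.2)) x
        - (∑ p, ω p • fderiv ℝ
            (fun y : PtR n ℓ => a (K y) ⬝ᵥ fderiv ℝ K y (Pi.single p 1, (0 : Fin ℓ → ℝ))) x)
        - ∑ q, α q • fderiv ℝ
            (fun y : PtR n ℓ => a (K y) ⬝ᵥ fderiv ℝ K y ((0 : Fin n → ℝ), Pi.single q 1)) x) x :=
    fun x => ((hPd x).fun_sub (HasFDerivAt.fun_sum fun p _ =>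
        (hQd (Pi.single p 1, (0 : Fin ℓ → ℝ)) x).const_mul (ω p))).fun_sub
      (HasFDerivAt.fun_sum fun q _ => (hQd ((0 : Fin n → ℝ), Pi.single q 1) x).const_mul (α q))
  have hfS : ∀ x : PtR n ℓ, fderiv ℝ (fun y : PtR n ℓ => h (K y, y.2)
      - (∑ p, ω p * (a (K y) ⬝ᵥ fderiv ℝ K y (Pi.single p 1, (0 : Fin ℓ → ℝ))))
      - ∑ q, α q * (a (K y) ⬝ᵥ fderiv ℝ K y ((0 : Fin n → ℝ), Pi.single q 1))) x
        (Pi.single i 1, (0 : Fin ℓ → ℝ)) =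
      fderiv ℝ (fun y : PtR n ℓ => h (K y, y.2)) x (Pi.single i 1, (0 : Fin ℓ → ℝ))
        - (∑ p, ω p * fderiv ℝ
            (fun y : PtR n ℓ => a (K y) ⬝ᵥ fderiv ℝ K y (Pi.single p 1, (0 : Fin ℓ → ℝ))) x
            (Pi.single i 1, (0 : Fin ℓ → ℝ)))
        - ∑ q, α q * fderiv ℝ
            (fun y : PtR n ℓ => a (K y) ⬝ᵥ fderiv ℝ K y ((0 : Fin n → ℝ), Pi.single q 1)) x
            (Pi.single i 1, (0 : Fin ℓ → ℝ)) := by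
    intro x
    rw [(hSd x).fderiv]
    simp [ContinuousLinearMap.sub_apply, ContinuousLinearMap.coe_sum', Finset.sum_apply,
      ContinuousLinearMap.smul_apply, smul_eq_mul]
  -- the pointwise identity
  have hpt : ∀ x : PtR n ℓ,
      ((DθR K x)ᵀ * OmegaR a (K x)).mulVec (ZhR a h (K x) x.2 + lieR ω α K x) i =
      fderiv ℝ (fun y : PtR n ℓ => h (K y, y.2)
        - (∑ p, ω p * (a (K y) ⬝ᵥ fderiv ℝ K y (Pi.single p 1, (0 : Fin ℓ → ℝ))))
        - ∑ q, α q * (a (K y) ⬝ᵥ fderiv ℝ K y ((0 : Fin n → ℝ), Pi.single q 1))) x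
          (Pi.single i 1, (0 : Fin ℓ → ℝ))
      + ((∑ p, ω p * fderiv ℝ
            (fun y : PtR n ℓ => a (K y) ⬝ᵥ fderiv ℝ K y (Pi.single i 1, (0 : Fin ℓ → ℝ))) x
            (Pi.single p 1, (0 : Fin ℓ → ℝ)))
        + ∑ q, α q * fderiv ℝ
            (fun y : PtR n ℓ => a (K y) ⬝ᵥ fderiv ℝ K y (Pi.single i 1, (0 : Fin ℓ → ℝ))) x
            ((0 : Fin n → ℝ), Pi.single q 1)) := by
    intro x
    rw [tmul_mulVec]
    have hrow : (fun p => DθR K x p i) =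
        fderiv ℝ K x (Pi.single i 1, (0 : Fin ℓ → ℝ)) := by
      funext p; rfl
    rw [hrow, Matrix.mulVec_add, dotProduct_add,
      omega_mulVec_Zh a h (K x) x.2 (hΩinv _ (hKU x)), grad_dot]
    -- Hamiltonian term
    have hhd : DifferentiableAt ℝ h (K x, x.2) :=
      (hh.differentiableOn one_ne_zero).differentiableAt
        ((hU.prod isOpen_univ).mem_nhds ⟨hKU x, trivial⟩)
    have hterm1 : fderiv ℝ (fun w => h (w, x.2)) (K x)
        (fderiv ℝ K x (Pi.single i 1, (0 : Fin ℓ → ℝ))) =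
        fderiv ℝ (fun y : PtR n ℓ => h (K y, y.2)) x (Pi.single i 1, (0 : Fin ℓ → ℝ)) := by
      have hz : HasFDerivAt (fun w => h (w, x.2))
          ((fderiv ℝ h (K x, x.2)).comp
            ((ContinuousLinearMap.id ℝ (Fin (2 * n) → ℝ)).prod 0)) (K x) :=
        hhd.hasFDerivAt.comp (K x) ((hasFDerivAt_id (K x)).prodMk (hasFDerivAt_const x.2 (K x)))
      have hP' : HasFDerivAt (fun y : PtR n ℓ => h (K y, y.2))
          ((fderiv ℝ h (K x, x.2)).comp ((fderiv ℝ K x).prod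
            (ContinuousLinearMap.snd ℝ (Fin n → ℝ) (Fin ℓ → ℝ)))) x :=
        hhd.hasFDerivAt.comp x ((hKd x).hasFDerivAt.prodMk hasFDerivAt_snd)
      rw [hz.fderiv, hP'.fderiv]
      simp
    -- Lie-derivative term
    have hθterm : ∀ v : PtR n ℓ,
        fderiv ℝ K x (Pi.single i 1, (0 : Fin ℓ → ℝ)) ⬝ᵥ
          (OmegaR a (K x)).mulVec (fderiv ℝ K x v) =
        fderiv ℝ (fun y : PtR n ℓ => a (K y) ⬝ᵥ fderiv ℝ K y v) x
            (Pi.single i 1, (0 : Fin ℓ → ℝ))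
          - fderiv ℝ (fun y : PtR n ℓ =>
              a (K y) ⬝ᵥ fderiv ℝ K y (Pi.single i 1, (0 : Fin ℓ → ℝ))) x v := by
      intro v
      rw [omega_bilinear]
      exact (Q_antisym hU ha hK hKU (Pi.single i 1, (0 : Fin ℓ → ℝ)) v x).symm
    have hlie : fderiv ℝ K x (Pi.single i 1, (0 : Fin ℓ → ℝ)) ⬝ᵥ
        (OmegaR a (K x)).mulVec (lieR ω α K x) =
        -((∑ p, ω p * (fderiv ℝ K x (Pi.single i 1, (0 : Fin ℓ → ℝ)) ⬝ᵥ
            (OmegaR a (K x)).mulVec (fderiv ℝ K x (Pi.single p 1, (0 : Fin ℓ → ℝ)))))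
          + ∑ q, α q * (fderiv ℝ K x (Pi.single i 1, (0 : Fin ℓ → ℝ)) ⬝ᵥ
            (OmegaR a (K x)).mulVec (fderiv ℝ K x ((0 : Fin n → ℝ), Pi.single q 1)))) := by
      show fderiv ℝ K x (Pi.single i 1, (0 : Fin ℓ → ℝ)) ⬝ᵥ
          (OmegaR a (K x)).mulVec
            (-((∑ p, ω p • fderiv ℝ K x (Pi.single p 1, 0)) +
              ∑ q, α q • fderiv ℝ K x (0, Pi.single q 1))) = _
      rw [Matrix.mulVec_neg, dotProduct_neg, Matrix.mulVec_add, dotProduct_add,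
        mulVec_finsum, mulVec_finsum, dot_sum, dot_sum]
      simp_rw [Matrix.mulVec_smul, dotProduct_smul, smul_eq_mul]
    rw [hterm1, hlie]
    simp_rw [hθterm]
    rw [hfS x]
    simp only [mul_sub, Finset.sum_sub_distrib]
    ring
  -- put everything together
  show (∫ x in Set.Icc (0 : PtR n ℓ) 1,
      ((DθR K x)ᵀ * OmegaR a (K x)).mulVec (ZhR a h (K x) x.2 + lieR ω α K x) i) = 0
  rw [setIntegral_congr_fun measurableSet_Icc (fun x _ => hpt x)]
  have hcS : Continuous fun x : PtR n ℓ => fderiv ℝ (fun y : PtR n ℓ => h (K y, y.2)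
      - (∑ p, ω p * (a (K y) ⬝ᵥ fderiv ℝ K y (Pi.single p 1, (0 : Fin ℓ → ℝ))))
      - ∑ q, α q * (a (K y) ⬝ᵥ fderiv ℝ K y ((0 : Fin n → ℝ), Pi.single q 1))) x
        (Pi.single i 1, (0 : Fin ℓ → ℝ)) :=
    ((hSc.fderiv_right (m := 0) le_rfl).continuous).clm_apply continuous_const
  have hcQi : Continuous fun x : PtR n ℓ => fderiv ℝ
      (fun y : PtR n ℓ => a (K y) ⬝ᵥ fderiv ℝ K y (Pi.single i 1, (0 : Fin ℓ → ℝ))) x :=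
    ((hQc (Pi.single i 1, (0 : Fin ℓ → ℝ))).fderiv_right (m := 0) le_rfl).continuous
  have hI1 : IntegrableOn (fun x : PtR n ℓ => fderiv ℝ (fun y : PtR n ℓ => h (K y, y.2)
      - (∑ p, ω p * (a (K y) ⬝ᵥ fderiv ℝ K y (Pi.single p 1, (0 : Fin ℓ → ℝ))))
      - ∑ q, α q * (a (K y) ⬝ᵥ fderiv ℝ K y ((0 : Fin n → ℝ), Pi.single q 1))) x
        (Pi.single i 1, (0 : Fin ℓ → ℝ))) (Set.Icc 0 1) :=
    hcS.continuousOn.integrableOn_compact isCompact_Icc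
  have hI2 : IntegrableOn (fun x : PtR n ℓ => ∑ p, ω p * fderiv ℝ
      (fun y : PtR n ℓ => a (K y) ⬝ᵥ fderiv ℝ K y (Pi.single i 1, (0 : Fin ℓ → ℝ))) x
      (Pi.single p 1, (0 : Fin ℓ → ℝ))) (Set.Icc 0 1) :=
    ((continuous_finset_sum _ fun p _ =>
        continuous_const.mul (hcQi.clm_apply continuous_const)).continuousOn).integrableOn_compact
      isCompact_Icc
  have hI3 : IntegrableOn (fun x : PtR n ℓ => ∑ q, α q * fderiv ℝ
      (fun y : PtR n ℓ => a (K y) ⬝ᵥ fderiv ℝ K y (Pi.single i 1, (0 : Fin ℓ → ℝ))) x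
      ((0 : Fin n → ℝ), Pi.single q 1)) (Set.Icc 0 1) :=
    ((continuous_finset_sum _ fun q _ =>
        continuous_const.mul (hcQi.clm_apply continuous_const)).continuousOn).integrableOn_compact
      isCompact_Icc
  have hI23 : IntegrableOn (fun x : PtR n ℓ => (∑ p, ω p * fderiv ℝ
      (fun y : PtR n ℓ => a (K y) ⬝ᵥ fderiv ℝ K y (Pi.single i 1, (0 : Fin ℓ → ℝ))) x
      (Pi.single p 1, (0 : Fin ℓ → ℝ))) + ∑ q, α q * fderiv ℝ
      (fun y : PtR n ℓ => a (K y) ⬝ᵥ fderiv ℝ K y (Pi.single i 1, (0 : Fin ℓ → ℝ))) x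
      ((0 : Fin n → ℝ), Pi.single q 1)) (Set.Icc 0 1) := hI2.add hI3
  rw [integral_add hI1 hI23, integral_add hI2 hI3]
  rw [torus_deriv_theta_zero _ hSc hSper i]
  have hz2 : (∫ x in Set.Icc (0 : PtR n ℓ) 1, ∑ p, ω p * fderiv ℝ
      (fun y : PtR n ℓ => a (K y) ⬝ᵥ fderiv ℝ K y (Pi.single i 1, (0 : Fin ℓ → ℝ))) x
      (Pi.single p 1, (0 : Fin ℓ → ℝ))) = 0 := by
    rw [integral_finset_sum _ fun p _ =>
      ((continuous_const.fun_mul (hcQi.clm_apply continuous_const)).continuousOn).integrableOn_compact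
        isCompact_Icc]
    refine Finset.sum_eq_zero fun p _ => ?_
    rw [integral_const_mul,
      torus_deriv_theta_zero _ (hQc (Pi.single i 1, (0 : Fin ℓ → ℝ)))
        (hQper (Pi.single i 1, (0 : Fin ℓ → ℝ))) p, mul_zero]
  have hz3 : (∫ x in Set.Icc (0 : PtR n ℓ) 1, ∑ q, α q * fderiv ℝ
      (fun y : PtR n ℓ => a (K y) ⬝ᵥ fderiv ℝ K y (Pi.single i 1, (0 : Fin ℓ → ℝ))) x
      ((0 : Fin n → ℝ), Pi.single q 1)) = 0 := by
    rw [integral_finset_sum _ fun q _ =>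
      ((continuous_const.fun_mul (hcQi.clm_apply continuous_const)).continuousOn).integrableOn_compact
        isCompact_Icc]
    refine Finset.sum_eq_zero fun q _ => ?_
    rw [integral_const_mul,
      torus_deriv_phi_zero _ (hQc (Pi.single i 1, (0 : Fin ℓ → ℝ)))
        (hQper (Pi.single i 1, (0 : Fin ℓ → ℝ))) q, mul_zero]
  rw [hz2, hz3]
  ring


end
end

section
/- Algebraic identities of the adapted frame (core of Lemma 4.4): Let n ≥ 1 and let Ω, G, J ∈ ℝ^{2n×2n} with Ω antisymmetric and invertible, J = −Ω^{-1}G, and G symmetric. Let L ∈ ℝ^{2n×n} be such that L^⊤GL is invertible, and set B := (L^⊤GL)^{-1}, Ñ := JLB, A := −(1/2)Ñ^⊤ΩÑ, N := LA + Ñ, Ω_L := L^⊤ΩL, P := (L N) ∈ ℝ^{2n×2n}, Ω₀ := [[O_n, −I_n],[I_n, O_n]]. Then A is antisymmetric, L^⊤ΩN = Ω_L A − I_n, N^⊤ΩL = A^⊤Ω_L + I_n, N^⊤ΩN = A^⊤Ω_L A, and hence P^⊤ΩP − Ω₀ = [[Ω_L, Ω_L A],[A^⊤Ω_L, A^⊤Ω_L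 A]]. In particular, if Ω_L = O_n then P^⊤ΩP = Ω₀, i.e. P is a symplectic frame. -/
open Matrix

set_option maxHeartbeats 1000000

/-- **Algebraic identities of the adapted frame** (core of Lemma 4.4).
With `Ω` antisymmetric invertible, `G` symmetric, `J = -Ω⁻¹G`, `L` such that `LᵀGL` is
invertible, and with `B = (LᵀGL)⁻¹`, `Ñ = JLB`, `A = -(1/2)ÑᵀΩÑ`, `N = LA + Ñ`,
`Ω_L = LᵀΩL`, `P = (L N)`, `Ω₀ = [[0,-1],[1,0]]`: `A` is antisymmetric,
`LᵀΩN = Ω_L A - 1`, `NᵀΩL = AᵀΩ_L + 1`, `NᵀΩN = AᵀΩ_L A`, hence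
`PᵀΩP - Ω₀ = [[Ω_L, Ω_L A],[AᵀΩ_L, AᵀΩ_L A]]`; in particular `Ω_L = 0` implies
`PᵀΩP = Ω₀`, i.e. `P` is a symplectic frame. -/
theorem adapted_frame_algebraic_identities
    (n : ℕ) (hn : 1 ≤ n)
    (Ω G J : Matrix (Fin (2 * n)) (Fin (2 * n)) ℝ)
    (hΩanti : Ωᵀ = -Ω) (hΩinv : Ω.det ≠ 0) (hGsymm : Gᵀ = G)
    (hJ : J = -(Ω⁻¹ * G))
    (L : Matrix (Fin (2 * n)) (Fin n) ℝ)
    (hB : (Lᵀ * G * L).det ≠ 0) :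
    let B : Matrix (Fin n) (Fin n) ℝ := (Lᵀ * G * L)⁻¹
    let Nt : Matrix (Fin (2 * n)) (Fin n) ℝ := J * L * B
    let A : Matrix (Fin n) (Fin n) ℝ := -(((1 : ℝ)/2) • (Ntᵀ * Ω * Nt))
    let N : Matrix (Fin (2 * n)) (Fin n) ℝ := L * A + Nt
    let ΩL : Matrix (Fin n) (Fin n) ℝ := Lᵀ * Ω * L
    let P : Matrix (Fin (2 * n)) (Fin n ⊕ Fin n) ℝ := Matrix.fromCols L N
    let Ω₀ : Matrix (Fin n ⊕ Fin n) (Fin n ⊕ Fin n) ℝ := Matrix.fromBlocks 0 (-1) 1 0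
    Aᵀ = -A ∧
    Lᵀ * Ω * N = ΩL * A - 1 ∧
    Nᵀ * Ω * L = Aᵀ * ΩL + 1 ∧
    Nᵀ * Ω * N = Aᵀ * ΩL * A ∧
    Pᵀ * Ω * P - Ω₀ = Matrix.fromBlocks ΩL (ΩL * A) (Aᵀ * ΩL) (Aᵀ * ΩL * A) ∧
    (ΩL = 0 → Pᵀ * Ω * P = Ω₀) := by
  intro B Nt A N ΩL P Ω₀
  have hΩJ : Ω * J = -G := by
    rw [hJ, Matrix.mul_neg, ← Matrix.mul_assoc, Matrix.mul_nonsing_inv _ (isUnit_iff_ne_zero.mpr hΩinv), Matrix.one_mul]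
  have hBinv : (Lᵀ * G * L) * B = 1 := Matrix.mul_nonsing_inv _ (isUnit_iff_ne_zero.mpr hB)
  have h1 : Lᵀ * Ω * Nt = -1 := by
    have e : Lᵀ * Ω * Nt = Lᵀ * (Ω * J) * L * B := by
      show Lᵀ * Ω * (J * L * B) = _
      simp only [Matrix.mul_assoc]
    rw [e, hΩJ, Matrix.mul_neg, Matrix.neg_mul, Matrix.neg_mul, hBinv]
  have h2 : Ntᵀ * Ω * L = 1 := by
    have := congrArg Matrix.transpose h1
    simp only [Matrix.transpose_mul, Matrix.transpose_transpose, hΩanti,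
      Matrix.transpose_neg, Matrix.transpose_one, Matrix.mul_neg, Matrix.neg_mul,
      Matrix.mul_assoc] at this ⊢
    rwa [neg_inj] at this
  have hNtNt : Ntᵀ * Ω * Nt = (-2 : ℝ) • A := by
    show _ = (-2 : ℝ) • -(((1 : ℝ)/2) • (Ntᵀ * Ω * Nt))
    rw [smul_neg, smul_smul]
    norm_num
  have hS : (Ntᵀ * Ω * Nt)ᵀ = -(Ntᵀ * Ω * Nt) := by
    simp only [Matrix.transpose_mul, Matrix.transpose_transpose, hΩanti, Matrix.mul_neg,
      Matrix.neg_mul, Matrix.mul_assoc]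
  have hA : Aᵀ = -A := by
    show (-(((1 : ℝ)/2) • (Ntᵀ * Ω * Nt)))ᵀ = -(-(((1 : ℝ)/2) • (Ntᵀ * Ω * Nt)))
    rw [Matrix.transpose_neg, Matrix.transpose_smul, hS, smul_neg, neg_neg]
  have hLN : Lᵀ * Ω * N = ΩL * A - 1 := by
    show Lᵀ * Ω * (L * A + Nt) = ΩL * A - 1
    rw [Matrix.mul_add, ← Matrix.mul_assoc, h1]
    abel
  have hNL : Nᵀ * Ω * L = Aᵀ * ΩL + 1 := by
    show (L * A + Nt)ᵀ * Ω * L = Aᵀ * ΩL + 1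
    rw [Matrix.transpose_add, Matrix.transpose_mul, Matrix.add_mul, Matrix.add_mul, h2]
    rw [show Aᵀ * Lᵀ * Ω * L = Aᵀ * (Lᵀ * Ω * L) from by simp only [Matrix.mul_assoc]]
  have hNN : Nᵀ * Ω * N = Aᵀ * ΩL * A := by
    show (L * A + Nt)ᵀ * Ω * (L * A + Nt) = Aᵀ * ΩL * A
    rw [Matrix.transpose_add, Matrix.transpose_mul, Matrix.add_mul, Matrix.add_mul,
      Matrix.mul_add, Matrix.mul_add]
    have e1 : Aᵀ * Lᵀ * Ω * (L * A) = Aᵀ * ΩL * A := by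
      show _ = Aᵀ * (Lᵀ * Ω * L) * A
      simp only [Matrix.mul_assoc]
    have e2 : Aᵀ * Lᵀ * Ω * Nt = Aᵀ * (-1) := by
      rw [← h1]; simp only [Matrix.mul_assoc]
    have e3 : Ntᵀ * Ω * (L * A) = A := by
      rw [← Matrix.mul_assoc, h2, Matrix.one_mul]
    have h2A : (-2 : ℝ) • A = -(A + A) := by
      rw [neg_smul, two_smul ℝ A]
    rw [e1, e2, e3, hNtNt, h2A, hA]
    simp only [Matrix.mul_neg, Matrix.mul_one, Matrix.neg_mul, neg_neg]
    abel
  have hblock : Pᵀ * Ω * P = Matrix.fromBlocks ΩL (ΩL * A - 1) (Aᵀ * ΩL + 1) (Aᵀ * ΩL * A) := by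
    show (Matrix.fromCols L N)ᵀ * Ω * Matrix.fromCols L N = _
    rw [Matrix.transpose_fromCols, Matrix.fromRows_mul, Matrix.fromRows_mul_fromCols,
      hLN, hNL, hNN]
  have h5 : Pᵀ * Ω * P - Ω₀ = Matrix.fromBlocks ΩL (ΩL * A) (Aᵀ * ΩL) (Aᵀ * ΩL * A) := by
    rw [hblock]
    show _ - Matrix.fromBlocks 0 (-1) 1 0 = _
    rw [sub_eq_add_neg, Matrix.fromBlocks_neg, Matrix.fromBlocks_add, neg_zero, add_zero,
      add_zero, neg_neg, sub_add_cancel, add_neg_cancel_right]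
  refine ⟨hA, hLN, hNL, hNN, h5, fun h0 => ?_⟩
  have := h5
  rw [h0] at this
  simp only [Matrix.zero_mul, Matrix.mul_zero, Matrix.fromBlocks_zero] at this
  linear_combination (norm := abel) this
end

section
/- Upper triangular cohomological equations (Lemma 5.1): Let (ω,α) ∈ D_{γ,τ} with γ > 0, τ ≥ n + ℓ − 1, and let η = (η^L, η^N) : 𝕋^n × 𝕋^ℓ → ℝ^n × ℝ^n and T : 𝕋^n × 𝕋^ℓ → ℝ^{n×n} have components in A(𝕋^n_ρ × 𝕋^ℓ_ρ). Assume det⟨T⟩ ≠ 0 and ⟨η^N⟩ = 0_n. Then for any ξ^L_{0,0} ∈ ℝ^n the system T ξ^N + ℒ_{ω,α}ξ^L = η^L, ℒ_{ω,α}ξ^N = η^N has a solution ξ^N(θ,φ) = ξ^N_{0,0} + R_{ω,α}(η^N)(θ,φ), ξ^L(θ,φ) = ξ^L_{0,0} + R_{ω,α}(η^L − T ξ^N)(θ,φ), where ξ^N_{0,0} = ⟨T⟩^{-1}⟨η^L − T R_{ω,α}(η^N)⟩. Moreover, for every 0 < 2δ < ρ: |ξ^N_{0,0}| ≤ |⟨T⟩^{-1}|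 ( ‖η^L‖_ρ + c_R γ^{-1}δ^{-τ}‖T‖_ρ‖η^N‖_ρ ), ‖ξ^N‖_{ρ−δ} ≤ |ξ^N_{0,0}| + c_R γ^{-1}δ^{-τ}‖η^N‖_ρ, and ‖ξ^L‖_{ρ−2δ} ≤ |ξ^L_{0,0}| + c_R γ^{-1}δ^{-τ}( ‖η^L‖_{ρ−δ} + ‖T‖_ρ‖ξ^N‖_{ρ−δ} ). -/
open scoped BigOperators
open Matrix MeasureTheory

noncomputable section

attribute [local instance] Matrix.linftyOpNormedAddCommGroup

/-- Points of the complexified torus `ℂⁿ/ℤⁿ × ℂˡ/ℤˡ`, modelled on `ℂⁿ × ℂˡ`. -/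
abbrev Pt (n ℓ : ℕ) := (Fin n → ℂ) × (Fin ℓ → ℂ)

/-- The complex strip `𝕋ⁿ_ρ × 𝕋ˡ_ρ` of width `ρ` (modulo the `ℤ`-periodicity). -/
def TStrip (n ℓ : ℕ) (ρ : ℝ) : Set (Pt n ℓ) :=
  {z | (∀ i, |(z.1 i).im| < ρ) ∧ (∀ j, |(z.2 j).im| < ρ)}

/-- The complex strip `𝕋ˡ_ρ` in the angles `φ` only. -/
def phiStrip (ℓ : ℕ) (ρ : ℝ) : Set (Fin ℓ → ℂ) :=
  {φ | ∀ j, |(φ j).im| < ρ}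

/-- `ℤ^{n+ℓ}`-periodicity. -/
def PerC {n ℓ : ℕ} {E : Type*} (f : Pt n ℓ → E) : Prop :=
  ∀ (θ : Fin n → ℂ) (φ : Fin ℓ → ℂ) (k : Fin n → ℤ) (m : Fin ℓ → ℤ),
    f (θ + fun i => (k i : ℂ), φ + fun j => (m j : ℂ)) = f (θ, φ)

/-- Membership in the space `A(𝕋ⁿ_ρ × 𝕋ˡ_ρ)`: periodic, holomorphic on the strip,
real-valued at real arguments, and with bounded sup norm. -/
structure InA (n ℓ : ℕ) (ρ : ℝ) (f : Pt n ℓ → ℂ) : Prop where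
  periodic : PerC f
  diff : DifferentiableOn ℂ f (TStrip n ℓ ρ)
  realOnReal : ∀ z : Pt n ℓ, (∀ i, (z.1 i).im = 0) → (∀ j, (z.2 j).im = 0) → (f z).im = 0
  bdd : BddAbove ((fun z => ‖f z‖) '' TStrip n ℓ ρ)

/-- Sup norm `‖·‖_ρ` over the strip of width `ρ`. -/
def normS {n ℓ : ℕ} {E : Type*} [Norm E] (ρ : ℝ) (f : Pt n ℓ → E) : ℝ :=
  sSup ((fun z => ‖f z‖) '' TStrip n ℓ ρ)

/-- The Lie derivative `ℒ_{ω,α} f = -(Σ ωᵢ ∂f/∂θᵢ + Σ αⱼ ∂f/∂φⱼ)`. -/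
def lieD {n ℓ : ℕ} {E : Type*} [NormedAddCommGroup E] [NormedSpace ℂ E]
    (ω : Fin n → ℝ) (α : Fin ℓ → ℝ) (f : Pt n ℓ → E) (z : Pt n ℓ) : E :=
  -((∑ i, (ω i : ℂ) • fderiv ℂ f z (Pi.single i 1, 0)) +
    ∑ j, (α j : ℂ) • fderiv ℂ f z (0, Pi.single j 1))

/-- Entrywise Lie derivative of a matrix-valued map. -/
def lieM {n ℓ : ℕ} {I J : Type*} (ω : Fin n → ℝ) (α : Fin ℓ → ℝ)
    (M : Pt n ℓ → Matrix I J ℂ) (z : Pt n ℓ) : Matrix I J ℂ :=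
  Matrix.of fun i j => lieD ω α (fun w => M w i j) z

/-- Diophantine condition `(ω,α) ∈ D(γ,τ)`. -/
def DiophFreq {n ℓ : ℕ} (γ τ : ℝ) (ω : Fin n → ℝ) (α : Fin ℓ → ℝ) : Prop :=
  ∀ (k : Fin n → ℤ) (m : Fin ℓ → ℤ), ¬(k = 0 ∧ m = 0) →
    γ / (((∑ i, |(k i : ℝ)|) + ∑ j, |(m j : ℝ)|) ^ τ) ≤
      |(∑ i, (k i : ℝ) * ω i) + ∑ j, (m j : ℝ) * α j|

/-- Average `⟨f⟩` over the real torus. -/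
def averT {n ℓ : ℕ} {E : Type*} [NormedAddCommGroup E] [NormedSpace ℝ E]
    (f : Pt n ℓ → E) : E :=
  ∫ x in Set.Icc (0 : (Fin n → ℝ) × (Fin ℓ → ℝ)) 1,
    f (fun i => (x.1 i : ℂ), fun j => (x.2 j : ℂ))

/-- Entrywise average of a matrix-valued map. -/
def averM {n ℓ : ℕ} {I J : Type*} (M : Pt n ℓ → Matrix I J ℂ) : Matrix I J ℂ :=
  Matrix.of fun i j => averT (fun z => M z i j)

/-- Complex Jacobian matrix of a self-map of `ℂᵐ`. -/
def cJac {m : ℕ} (a : (Fin m → ℂ) → (Fin m → ℂ)) (z : Fin m → ℂ) :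
    Matrix (Fin m) (Fin m) ℂ :=
  Matrix.of fun i j => fderiv ℂ a z (Pi.single j 1) i

/-- Exact symplectic matrix `Ω(z) = (Da(z))ᵀ - Da(z)`. -/
def OmegaOf {m : ℕ} (a : (Fin m → ℂ) → (Fin m → ℂ)) (z : Fin m → ℂ) :
    Matrix (Fin m) (Fin m) ℂ :=
  (cJac a z)ᵀ - cJac a z

/-- Directional derivative `D_zM(z)[v]` of a matrix-valued map. -/
def matDir {m p q : ℕ} (M : (Fin m → ℂ) → Matrix (Fin p) (Fin q) ℂ)
    (z v : Fin m → ℂ) : Matrix (Fin p) (Fin q) ℂ :=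
  Matrix.of fun i j => fderiv ℂ (fun w => M w i j) z v

/-- Second directional derivative `D²_zM(z)[v,w]` of a matrix-valued map. -/
def matDir2 {m p q : ℕ} (M : (Fin m → ℂ) → Matrix (Fin p) (Fin q) ℂ)
    (z v w : Fin m → ℂ) : Matrix (Fin p) (Fin q) ℂ :=
  Matrix.of fun i j => fderiv ℂ (fun u => fderiv ℂ (fun y => M y i j) u v) z w

/-- Second directional derivative of a vector-valued map. -/
def vecDir2 {m : ℕ} (F : (Fin m → ℂ) → (Fin m → ℂ)) (z v w : Fin m → ℂ) :
    Fin m → ℂ :=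
  fun i => fderiv ℂ (fun u => fderiv ℂ (fun y => F y i) u v) z w

/-- The gradient `(D_z h)ᵀ` of the Hamiltonian in the phase-space variables. -/
def gradz {m ℓ : ℕ} (h : (Fin m → ℂ) × (Fin ℓ → ℂ) → ℂ) (z : Fin m → ℂ)
    (φ : Fin ℓ → ℂ) : Fin m → ℂ :=
  fun i => fderiv ℂ (fun w => h (w, φ)) z (Pi.single i 1)

/-- The Hamiltonian vector field `Z_h(z,φ) = Ω(z)⁻¹ (D_z h(z,φ))ᵀ`. -/
def ZhOf {m ℓ : ℕ} (a : (Fin m → ℂ) → (Fin m → ℂ))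
    (h : (Fin m → ℂ) × (Fin ℓ → ℂ) → ℂ) (z : Fin m → ℂ) (φ : Fin ℓ → ℂ) :
    Fin m → ℂ :=
  (OmegaOf a z)⁻¹.mulVec (gradz h z φ)

/-- The Jacobian `D_z Z_h`. -/
def DzZh {m ℓ : ℕ} (a : (Fin m → ℂ) → (Fin m → ℂ))
    (h : (Fin m → ℂ) × (Fin ℓ → ℂ) → ℂ) (z : Fin m → ℂ) (φ : Fin ℓ → ℂ) :
    Matrix (Fin m) (Fin m) ℂ :=
  Matrix.of fun i j => fderiv ℂ (fun w => ZhOf a h w φ i) z (Pi.single j 1)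

/-- `J = -Ω⁻¹G`. -/
def JOf {m : ℕ} (a : (Fin m → ℂ) → (Fin m → ℂ))
    (G : (Fin m → ℂ) → Matrix (Fin m) (Fin m) ℂ) (z : Fin m → ℂ) :
    Matrix (Fin m) (Fin m) ℂ :=
  -((OmegaOf a z)⁻¹ * G z)

/-- `T_h(z,φ) = Ω(z)(D_zZ_h - D_zJ[Z_h]·J⁻¹ - J·D_zZ_h·J⁻¹)`. -/
def ThOf {m ℓ : ℕ} (a : (Fin m → ℂ) → (Fin m → ℂ))
    (G : (Fin m → ℂ) → Matrix (Fin m) (Fin m) ℂ)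
    (h : (Fin m → ℂ) × (Fin ℓ → ℂ) → ℂ) (z : Fin m → ℂ) (φ : Fin ℓ → ℂ) :
    Matrix (Fin m) (Fin m) ℂ :=
  OmegaOf a z *
    (DzZh a h z φ - matDir (JOf a G) z (ZhOf a h z φ) * (JOf a G z)⁻¹
      - JOf a G z * DzZh a h z φ * (JOf a G z)⁻¹)

/-- `L = D_θ K` as a matrix-valued map. -/
def DθM {n ℓ m : ℕ} (K : Pt n ℓ → (Fin m → ℂ)) (z : Pt n ℓ) :
    Matrix (Fin m) (Fin n) ℂ :=
  Matrix.of fun p i => fderiv ℂ K z (Pi.single i 1, 0) p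

/-- The transversality matrix `B = (Lᵀ G(K) L)⁻¹`. -/
def BmatOf {n ℓ nn : ℕ} (G : (Fin nn → ℂ) → Matrix (Fin nn) (Fin nn) ℂ)
    (K : Pt n ℓ → (Fin nn → ℂ)) (z : Pt n ℓ) : Matrix (Fin n) (Fin n) ℂ :=
  ((DθM K z)ᵀ * G (K z) * DθM K z)⁻¹

/-- `Ñ = J(K) L B`. -/
def NtildeOf {n ℓ nn : ℕ} (a : (Fin nn → ℂ) → (Fin nn → ℂ))
    (G : (Fin nn → ℂ) → Matrix (Fin nn) (Fin nn) ℂ)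
    (K : Pt n ℓ → (Fin nn → ℂ)) (z : Pt n ℓ) : Matrix (Fin nn) (Fin n) ℂ :=
  JOf a G (K z) * DθM K z * BmatOf G K z

/-- `A = -(1/2) Ñᵀ Ω(K) Ñ`. -/
def AmatOf {n ℓ nn : ℕ} (a : (Fin nn → ℂ) → (Fin nn → ℂ))
    (G : (Fin nn → ℂ) → Matrix (Fin nn) (Fin nn) ℂ)
    (K : Pt n ℓ → (Fin nn → ℂ)) (z : Pt n ℓ) : Matrix (Fin n) (Fin n) ℂ :=
  -(((1 : ℂ)/2) • ((NtildeOf a G K z)ᵀ * OmegaOf a (K z) * NtildeOf a G K z))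

/-- `N = L A + Ñ`. -/
def NmatOf {n ℓ nn : ℕ} (a : (Fin nn → ℂ) → (Fin nn → ℂ))
    (G : (Fin nn → ℂ) → Matrix (Fin nn) (Fin nn) ℂ)
    (K : Pt n ℓ → (Fin nn → ℂ)) (z : Pt n ℓ) : Matrix (Fin nn) (Fin n) ℂ :=
  DθM K z * AmatOf a G K z + NtildeOf a G K z

/-- The juxtaposed frame `P = (L N)`. -/
def PmatOf {n ℓ nn : ℕ} (a : (Fin nn → ℂ) → (Fin nn → ℂ))
    (G : (Fin nn → ℂ) → Matrix (Fin nn) (Fin nn) ℂ)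
    (K : Pt n ℓ → (Fin nn → ℂ)) (z : Pt n ℓ) :
    Matrix (Fin nn) (Fin n ⊕ Fin n) ℂ :=
  Matrix.fromCols (DθM K z) (NmatOf a G K z)

/-- The Darboux matrix `Ω₀`. -/
def Omega0 (n : ℕ) : Matrix (Fin n ⊕ Fin n) (Fin n ⊕ Fin n) ℂ :=
  Matrix.fromBlocks 0 (-1) 1 0

/-- The torsion matrix
`T = -(1/2) Ñᵀ(T_h + T_hᵀ)Ñ + Ñᵀ T_hᵀ N + Nᵀ T_h Ñ`. -/
def TtorOf {n ℓ nn : ℕ} (a : (Fin nn → ℂ) → (Fin nn → ℂ))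
    (G : (Fin nn → ℂ) → Matrix (Fin nn) (Fin nn) ℂ)
    (h : (Fin nn → ℂ) × (Fin ℓ → ℂ) → ℂ)
    (K : Pt n ℓ → (Fin nn → ℂ)) (z : Pt n ℓ) : Matrix (Fin n) (Fin n) ℂ :=
  -(((1 : ℂ)/2) • ((NtildeOf a G K z)ᵀ *
      (ThOf a G h (K z) z.2 + (ThOf a G h (K z) z.2)ᵀ) * NtildeOf a G K z))
    + (NtildeOf a G K z)ᵀ * (ThOf a G h (K z) z.2)ᵀ * NmatOf a G K z
    + (NmatOf a G K z)ᵀ * ThOf a G h (K z) z.2 * NtildeOf a G K z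

/-- The invariance error `E = Z_h(K,φ) + ℒ_{ω,α}K`. -/
def ErrOf {n ℓ nn : ℕ} (a : (Fin nn → ℂ) → (Fin nn → ℂ))
    (h : (Fin nn → ℂ) × (Fin ℓ → ℂ) → ℂ) (K : Pt n ℓ → (Fin nn → ℂ))
    (ω : Fin n → ℝ) (α : Fin ℓ → ℝ) (z : Pt n ℓ) : Fin nn → ℂ :=
  ZhOf a h (K z) z.2 + lieD ω α K z


section Helpers

variable {n ℓ : ℕ}

lemma isOpen_TStrip (n ℓ : ℕ) (ρ : ℝ) : IsOpen (TStrip n ℓ ρ) := by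
  have h1 : TStrip n ℓ ρ = (⋂ i, {z : Pt n ℓ | |(z.1 i).im| < ρ}) ∩
      (⋂ j, {z : Pt n ℓ | |(z.2 j).im| < ρ}) := by
    ext z; simp [TStrip, Set.mem_iInter]
  rw [h1]
  refine IsOpen.inter (isOpen_iInter_of_finite fun i => ?_)
    (isOpen_iInter_of_finite fun j => ?_)
  · exact isOpen_lt (by fun_prop) continuous_const
  · exact isOpen_lt (by fun_prop) continuous_const

lemma TStrip_mono {ρ₁ ρ₂ : ℝ} (h : ρ₁ ≤ ρ₂) : TStrip n ℓ ρ₁ ⊆ TStrip n ℓ ρ₂ :=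
  fun _ hz => ⟨fun i => lt_of_lt_of_le (hz.1 i) h, fun j => lt_of_lt_of_le (hz.2 j) h⟩

/-- The real embedding of the torus into the strip. -/
def embedR (n ℓ : ℕ) (x : (Fin n → ℝ) × (Fin ℓ → ℝ)) : Pt n ℓ :=
  (fun i => (x.1 i : ℂ), fun j => (x.2 j : ℂ))

lemma embedR_mem {ρ : ℝ} (hρ : 0 < ρ) (x : (Fin n → ℝ) × (Fin ℓ → ℝ)) :
    embedR n ℓ x ∈ TStrip n ℓ ρ := by
  constructor <;> intro i <;> simp [embedR, hρ]

lemma continuous_embedR : Continuous (embedR n ℓ) := by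
  refine Continuous.prodMk ?_ ?_ <;> exact continuous_pi fun i => by fun_prop

lemma averT_eq {E : Type*} [NormedAddCommGroup E] [NormedSpace ℝ E] (f : Pt n ℓ → E) :
    averT f = ∫ x in Set.Icc (0 : (Fin n → ℝ) × (Fin ℓ → ℝ)) 1, f (embedR n ℓ x) := rfl

lemma exists_delta_mem {ρ : ℝ} {z : Pt n ℓ} (hρ : 0 < ρ) (hz : z ∈ TStrip n ℓ ρ) :
    ∃ δ : ℝ, 0 < δ ∧ δ < ρ ∧ z ∈ TStrip n ℓ (ρ - δ) := by
  classical
  set S : Finset ℝ := insert 0 ((Finset.univ.image fun i => |(z.1 i).im|) ∪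
    (Finset.univ.image fun j => |(z.2 j).im|)) with hS
  have hSne : S.Nonempty := ⟨0, Finset.mem_insert_self _ _⟩
  set M : ℝ := S.max' hSne with hM
  have hMlt : M < ρ := by
    apply Finset.max'_lt_iff S hSne |>.mpr
    intro y hy
    rcases Finset.mem_insert.mp hy with h | h
    · simpa [h] using hρ
    · rcases Finset.mem_union.mp h with h | h
      · obtain ⟨i, _, rfl⟩ := Finset.mem_image.mp h; exact hz.1 i
      · obtain ⟨j, _, rfl⟩ := Finset.mem_image.mp h; exact hz.2 j
  have hMle : ∀ y ∈ S, y ≤ M := fun y hy => Finset.le_max' S y hy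
  refine ⟨(ρ - M) / 2, by linarith, ?_, ?_, ?_⟩
  · have h0 : (0:ℝ) ≤ M := hMle 0 (Finset.mem_insert_self _ _)
    linarith
  · intro i
    have : |(z.1 i).im| ≤ M := hMle _ (Finset.mem_insert_of_mem
      (Finset.mem_union_left _ (Finset.mem_image_of_mem _ (Finset.mem_univ i))))
    linarith
  · intro j
    have : |(z.2 j).im| ≤ M := hMle _ (Finset.mem_insert_of_mem
      (Finset.mem_union_right _ (Finset.mem_image_of_mem _ (Finset.mem_univ j))))
    linarith

lemma TStrip_nonempty {ρ : ℝ} (hρ : 0 < ρ) : (TStrip n ℓ ρ).Nonempty :=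
  ⟨embedR n ℓ 0, embedR_mem hρ 0⟩

lemma le_normS {E : Type*} [NormedAddCommGroup E] {ρ : ℝ} {f : Pt n ℓ → E}
    (hb : BddAbove ((fun z => ‖f z‖) '' TStrip n ℓ ρ)) {z : Pt n ℓ}
    (hz : z ∈ TStrip n ℓ ρ) : ‖f z‖ ≤ normS ρ f :=
  le_csSup hb ⟨z, hz, rfl⟩

lemma normS_le {E : Type*} [NormedAddCommGroup E] {ρ : ℝ} {f : Pt n ℓ → E} {C : ℝ}
    (hρ : 0 < ρ) (h : ∀ z ∈ TStrip n ℓ ρ, ‖f z‖ ≤ C) : normS ρ f ≤ C := by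
  refine csSup_le ((TStrip_nonempty hρ).image _) ?_
  rintro y ⟨z, hz, rfl⟩; exact h z hz

lemma bddAbove_normImg {E : Type*} [NormedAddCommGroup E] {ρ : ℝ} {f : Pt n ℓ → E} {C : ℝ}
    (h : ∀ z ∈ TStrip n ℓ ρ, ‖f z‖ ≤ C) :
    BddAbove ((fun z => ‖f z‖) '' TStrip n ℓ ρ) := by
  refine ⟨C, ?_⟩; rintro y ⟨z, hz, rfl⟩; exact h z hz

lemma normS_nonneg {E : Type*} [NormedAddCommGroup E] {ρ : ℝ} {f : Pt n ℓ → E}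
    (hρ : 0 < ρ) (hb : BddAbove ((fun z => ‖f z‖) '' TStrip n ℓ ρ)) :
    0 ≤ normS ρ f :=
  le_trans (norm_nonneg _) (le_normS hb (TStrip_nonempty hρ).some_mem)

/-- Continuity of the restriction of a function in `A(ρ)` to the real torus. -/
lemma InA.contR {ρ : ℝ} {f : Pt n ℓ → ℂ} (hρ : 0 < ρ) (hf : InA n ℓ ρ f) :
    Continuous fun x => f (embedR n ℓ x) := by
  have h1 : ContinuousOn f (TStrip n ℓ ρ) := hf.diff.continuousOn
  have h2 : ContinuousOn (fun x => f (embedR n ℓ x)) Set.univ :=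
    h1.comp (continuous_embedR.continuousOn (s := Set.univ))
      (fun x _ => embedR_mem hρ x)
  exact continuousOn_univ.mp h2

end Helpers

section Helpers2

variable {n ℓ : ℕ}

lemma volume_Icc_one (n ℓ : ℕ) :
    volume (Set.Icc (0 : (Fin n → ℝ) × (Fin ℓ → ℝ)) 1) = 1 := by
  rw [Set.Icc_prod_eq, Measure.volume_eq_prod, Measure.prod_prod,
    Real.volume_Icc_pi, Real.volume_Icc_pi]
  simp

lemma integrableR {E : Type*} [NormedAddCommGroup E] {f : Pt n ℓ → E}
    (h : Continuous fun x => f (embedR n ℓ x)) :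
    IntegrableOn (fun x => f (embedR n ℓ x)) (Set.Icc 0 1) volume :=
  h.continuousOn.integrableOn_compact isCompact_Icc

lemma norm_averT_le {E : Type*} [NormedAddCommGroup E] [NormedSpace ℝ E]
    {f : Pt n ℓ → E} {C : ℝ}
    (h : ∀ x : (Fin n → ℝ) × (Fin ℓ → ℝ), ‖f (embedR n ℓ x)‖ ≤ C) :
    ‖averT f‖ ≤ C := by
  rw [averT_eq]
  have hfin : IsFiniteMeasure (volume.restrict
      (Set.Icc (0 : (Fin n → ℝ) × (Fin ℓ → ℝ)) 1)) := by
    constructor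
    rw [Measure.restrict_apply_univ, volume_Icc_one]
    exact ENNReal.one_lt_top
  have := norm_integral_le_of_norm_le_const
    (μ := volume.restrict (Set.Icc (0 : (Fin n → ℝ) × (Fin ℓ → ℝ)) 1))
    (f := fun x => f (embedR n ℓ x)) (C := C) (Filter.Eventually.of_forall h)
  rwa [measureReal_def, Measure.restrict_apply_univ, volume_Icc_one, ENNReal.toReal_one, mul_one] at this

lemma averT_apply {m : ℕ} {f : Pt n ℓ → Fin m → ℂ}
    (h : ∀ i, Continuous fun x => f (embedR n ℓ x) i) (i : Fin m) :
    averT f i = averT fun z => f z i := by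
  have hint : IntegrableOn (fun x => f (embedR n ℓ x)) (Set.Icc 0 1) volume :=
    integrableR (continuous_pi h)
  have := (ContinuousLinearMap.proj (R := ℂ) (φ := fun _ : Fin m => ℂ) i).integral_comp_comm hint
  rw [averT_eq, averT_eq]
  simpa using this.symm

lemma averT_sub' {f g : Pt n ℓ → ℂ}
    (hf : Continuous fun x => f (embedR n ℓ x)) (hg : Continuous fun x => g (embedR n ℓ x)) :
    averT (fun z => f z - g z) = averT f - averT g := by
  rw [averT_eq, averT_eq, averT_eq]
  exact integral_sub (integrableR hf) (integrableR hg)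

lemma averT_mul_const {f : Pt n ℓ → ℂ} (c : ℂ) :
    averT (fun z => f z * c) = averT f * c := by
  rw [averT_eq, averT_eq]; exact integral_mul_const c _

lemma averT_finsum {m : ℕ} {f : Fin m → Pt n ℓ → ℂ}
    (h : ∀ j, Continuous fun x => f j (embedR n ℓ x)) :
    averT (fun z => ∑ j, f j z) = ∑ j, averT (f j) := by
  simp only [averT_eq]
  exact integral_finset_sum _ fun j _ => integrableR (h j)

lemma averT_im_eq_zero {f : Pt n ℓ → ℂ}
    (hc : Continuous fun x => f (embedR n ℓ x))
    (hre : ∀ z : Pt n ℓ, (∀ i, (z.1 i).im = 0) → (∀ j, (z.2 j).im = 0) → (f z).im = 0) :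
    (averT f).im = 0 := by
  have hint := integrableR hc
  have h2 := Complex.imCLM.integral_comp_comm hint
  rw [averT_eq]
  have h3 : ∀ x : (Fin n → ℝ) × (Fin ℓ → ℝ), (f (embedR n ℓ x)).im = 0 := by
    intro x
    exact hre _ (fun i => Complex.ofReal_im _) (fun j => Complex.ofReal_im _)
  have : Complex.imCLM (∫ x in Set.Icc (0 : (Fin n → ℝ) × (Fin ℓ → ℝ)) 1, f (embedR n ℓ x))
      = ∫ x in Set.Icc (0 : (Fin n → ℝ) × (Fin ℓ → ℝ)) 1, Complex.imCLM (f (embedR n ℓ x)) :=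
    h2.symm
  simp only [Complex.imCLM_apply] at this
  rw [this]
  simp [h3]

lemma mnorm_le {p q : ℕ} (M : Matrix (Fin p) (Fin q) ℂ) {c : ℝ} (h0 : 0 ≤ c)
    (h : ∀ i, ∑ j, ‖M i j‖ ≤ c) : ‖M‖ ≤ c := by
  rw [Matrix.linfty_opNorm_def]
  have : (Finset.univ.sup fun i => ∑ j, ‖M i j‖₊) ≤ ⟨c, h0⟩ := by
    refine Finset.sup_le fun i _ => ?_
    have := h i
    exact (NNReal.coe_le_coe (r₁ := ∑ j, ‖M i j‖₊) (r₂ := ⟨c, h0⟩)).mp (by push_cast; exact this)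
  exact_mod_cast this

lemma pinorm_le {m : ℕ} (x : Fin m → ℂ) {c : ℝ} (h0 : 0 ≤ c) (h : ∀ i, ‖x i‖ ≤ c) :
    ‖x‖ ≤ c := pi_norm_le_iff_of_nonneg h0 |>.mpr h

lemma lieD_apply_pi {m : ℕ} {ω : Fin n → ℝ} {α : Fin ℓ → ℝ} {f : Pt n ℓ → Fin m → ℂ} {z : Pt n ℓ}
    (h : ∀ i, DifferentiableAt ℂ (fun w => f w i) z) (p : Fin m) :
    lieD ω α f z p = lieD ω α (fun w => f w p) z := by
  have hd : fderiv ℂ f z = ContinuousLinearMap.pi fun i => fderiv ℂ (fun w => f w i) z :=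
    fderiv_pi h
  simp [lieD, hd]

lemma lieD_const_add {ω : Fin n → ℝ} {α : Fin ℓ → ℝ} {c : ℂ} {g : Pt n ℓ → ℂ} {z : Pt n ℓ} :
    lieD ω α (fun w => c + g w) z = lieD ω α g z := by
  simp [lieD, fderiv_const_add]

end Helpers2

section Helpers3

variable {n ℓ : ℕ}

lemma diffAt_of_InA {ρ : ℝ} {f : Pt n ℓ → ℂ} {z : Pt n ℓ} (hf : InA n ℓ ρ f)
    (hz : z ∈ TStrip n ℓ ρ) : DifferentiableAt ℂ f z :=
  hf.diff.differentiableAt ((isOpen_TStrip n ℓ ρ).mem_nhds hz)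

lemma bddAbove_vec {m : ℕ} {ρ : ℝ} {f : Pt n ℓ → Fin m → ℂ}
    (h : ∀ i, BddAbove ((fun z => ‖f z i‖) '' TStrip n ℓ ρ)) :
    BddAbove ((fun z => ‖f z‖) '' TStrip n ℓ ρ) := by
  classical
  choose c hc using h
  refine bddAbove_normImg (C := ∑ i, max (c i) 0) fun z hz => ?_
  refine pinorm_le _ (Finset.sum_nonneg fun i _ => le_max_right _ _) fun i => ?_
  calc ‖f z i‖ ≤ c i := hc i ⟨z, hz, rfl⟩
    _ ≤ max (c i) 0 := le_max_left _ _
    _ ≤ ∑ i, max (c i) 0 :=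
      Finset.single_le_sum (fun j _ => le_max_right (c j) 0) (Finset.mem_univ i)

lemma bddAbove_mat {p q : ℕ} {ρ : ℝ} {f : Pt n ℓ → Matrix (Fin p) (Fin q) ℂ}
    (h : ∀ i j, BddAbove ((fun z => ‖f z i j‖) '' TStrip n ℓ ρ)) :
    BddAbove ((fun z => ‖f z‖) '' TStrip n ℓ ρ) := by
  classical
  choose c hc using h
  refine bddAbove_normImg (C := ∑ i, ∑ j, max (c i j) 0) fun z hz => ?_
  refine mnorm_le _ (Finset.sum_nonneg fun i _ =>
    Finset.sum_nonneg fun j _ => le_max_right _ _) fun i => ?_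
  calc ∑ j, ‖f z i j‖ ≤ ∑ j, max (c i j) 0 := by
        refine Finset.sum_le_sum fun j _ => ?_
        exact (hc i j ⟨z, hz, rfl⟩).trans (le_max_left _ _)
    _ ≤ ∑ i, ∑ j, max (c i j) 0 :=
      Finset.single_le_sum (f := fun i => ∑ j, max (c i j) 0)
        (fun k _ => Finset.sum_nonneg fun j _ => le_max_right _ _) (Finset.mem_univ i)

lemma normS_comp_le {m : ℕ} {ρ : ℝ} (hρ : 0 < ρ) {f : Pt n ℓ → Fin m → ℂ}
    (hb : BddAbove ((fun z => ‖f z‖) '' TStrip n ℓ ρ)) (i : Fin m) :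
    normS ρ (fun z => f z i) ≤ normS ρ f :=
  normS_le hρ fun z hz => (norm_le_pi_norm (f z) i).trans (le_normS hb hz)

end Helpers3

section Key

theorem key_cohom
    (n ℓ : ℕ) (ρ γ τ cR : ℝ) (hρ : 0 < ρ) (hγ : 0 < γ) (hcR : 0 < cR)
    (ω : Fin n → ℝ) (α : Fin ℓ → ℝ)
    (ηL ηN : Pt n ℓ → (Fin n → ℂ))
    (hηL : ∀ i, InA n ℓ ρ (fun z => ηL z i))
    (hηN : ∀ i, InA n ℓ ρ (fun z => ηN z i))
    (T : Pt n ℓ → Matrix (Fin n) (Fin n) ℂ)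
    (hT : ∀ i j, InA n ℓ ρ (fun z => T z i j))
    (hdet : (averM T).det ≠ 0)
    (hηNavg : averT ηN = 0)
    (R : (Pt n ℓ → ℂ) → (Pt n ℓ → ℂ))
    (hR : ∀ ρ' : ℝ, 0 < ρ' → ρ' ≤ ρ → ∀ v : Pt n ℓ → ℂ, InA n ℓ ρ' v →
      averT (R v) = 0 ∧
      (∀ δ : ℝ, 0 < δ → δ < ρ' →
        InA n ℓ (ρ' - δ) (R v) ∧
        normS (ρ' - δ) (R v) ≤ cR * normS ρ' v / (γ * δ ^ τ)) ∧
      (∀ z ∈ TStrip n ℓ ρ', lieD ω α (R v) z = v z - averT v))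
    (ξL00 : Fin n → ℂ)
    (ξN00 : Fin n → ℂ)
    (hξN00 : ξN00 = (averM T)⁻¹.mulVec
      (averT (fun z => ηL z - (T z).mulVec (fun i => R (fun w => ηN w i) z))))
    (ξN : Pt n ℓ → (Fin n → ℂ))
    (hξN : ξN = fun z => ξN00 + fun i => R (fun w => ηN w i) z)
    (ξL : Pt n ℓ → (Fin n → ℂ))
    (hξL : ξL = fun z => ξL00 +
      fun i => R (fun w => (ηL w - (T w).mulVec (ξN w)) i) z) :
    (∀ z ∈ TStrip n ℓ ρ,
        (T z).mulVec (ξN z) + lieD ω α ξL z = ηL z ∧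
        lieD ω α ξN z = ηN z) ∧
    (∀ δ : ℝ, 0 < δ → 2 * δ < ρ →
        ‖ξN00‖ ≤ ‖(averM T)⁻¹‖ *
            (normS ρ ηL + cR / (γ * δ ^ τ) * normS ρ T * normS ρ ηN) ∧
        normS (ρ - δ) ξN ≤ ‖ξN00‖ + cR / (γ * δ ^ τ) * normS ρ ηN ∧
        normS (ρ - 2 * δ) ξL ≤ ‖ξL00‖ +
            cR / (γ * δ ^ τ) *
              (normS (ρ - δ) ηL + normS ρ T * normS (ρ - δ) ξN)) := by
  classical
  have hρ2 : 0 < ρ / 2 := half_pos hρ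
  have hpos : ∀ δ : ℝ, 0 < δ → 0 < γ * δ ^ τ :=
    fun δ hδ => mul_pos hγ (Real.rpow_pos_of_pos hδ τ)
  -- facts about R applied to the components of ηN
  have hRN := fun i => hR ρ hρ le_rfl (fun w => ηN w i) (hηN i)
  have hRNInA : ∀ δ : ℝ, 0 < δ → δ < ρ → ∀ i,
      InA n ℓ (ρ - δ) (R fun w => ηN w i) :=
    fun δ h1 h2 i => ((hRN i).2.1 δ h1 h2).1
  have hRNnorm : ∀ δ : ℝ, 0 < δ → δ < ρ → ∀ i,
      normS (ρ - δ) (R fun w => ηN w i) ≤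
        cR * normS ρ (fun z => ηN z i) / (γ * δ ^ τ) :=
    fun δ h1 h2 i => ((hRN i).2.1 δ h1 h2).2
  have hRNInA2 : ∀ i, InA n ℓ (ρ / 2) (R fun w => ηN w i) := by
    intro i
    have h := hRNInA (ρ / 2) hρ2 (by linarith) i
    rwa [show ρ - ρ / 2 = ρ / 2 by ring] at h
  -- boundedness and nonnegativity of norms
  have hbddηL : BddAbove ((fun z => ‖ηL z‖) '' TStrip n ℓ ρ) :=
    bddAbove_vec fun i => (hηL i).bdd
  have hbddηN : BddAbove ((fun z => ‖ηN z‖) '' TStrip n ℓ ρ) :=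
    bddAbove_vec fun i => (hηN i).bdd
  have hbddT : BddAbove ((fun z => ‖T z‖) '' TStrip n ℓ ρ) :=
    bddAbove_mat fun i j => (hT i j).bdd
  have h0ηL : 0 ≤ normS ρ ηL := normS_nonneg hρ hbddηL
  have h0ηN : 0 ≤ normS ρ ηN := normS_nonneg hρ hbddηN
  have h0T : 0 ≤ normS ρ T := normS_nonneg hρ hbddT
  have hηNc : ∀ i, normS ρ (fun z => ηN z i) ≤ normS ρ ηN :=
    normS_comp_le hρ hbddηN
  -- uniform bound on the vector of solutions R ηN
  have hRVnorm : ∀ δ : ℝ, 0 < δ → δ < ρ → ∀ z ∈ TStrip n ℓ (ρ - δ),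
      ‖(fun i => R (fun w => ηN w i) z : Fin n → ℂ)‖ ≤
        cR / (γ * δ ^ τ) * normS ρ ηN := by
    intro δ h1 h2 z hz
    have hD := hpos δ h1
    refine pinorm_le _ (mul_nonneg (div_nonneg hcR.le hD.le) h0ηN) fun i => ?_
    calc ‖R (fun w => ηN w i) z‖
        ≤ normS (ρ - δ) (R fun w => ηN w i) := le_normS (hRNInA δ h1 h2 i).bdd hz
      _ ≤ cR * normS ρ (fun z => ηN z i) / (γ * δ ^ τ) := hRNnorm δ h1 h2 i
      _ ≤ cR / (γ * δ ^ τ) * normS ρ ηN := by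
          rw [div_mul_eq_mul_div]
          gcongr
          exact hηNc i
  -- continuity on the real torus
  have cT : ∀ i j, Continuous fun x => T (embedR n ℓ x) i j :=
    fun i j => (hT i j).contR hρ
  have cηL : ∀ i, Continuous fun x => ηL (embedR n ℓ x) i :=
    fun i => (hηL i).contR hρ
  have cηN : ∀ i, Continuous fun x => ηN (embedR n ℓ x) i :=
    fun i => (hηN i).contR hρ
  have cRN : ∀ i, Continuous fun x => R (fun w => ηN w i) (embedR n ℓ x) :=
    fun i => (hRNInA2 i).contR hρ2
  -- the function g whose average defines ξN00
  have hg_apply : ∀ (z : Pt n ℓ) (i : Fin n),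
      (ηL z - (T z).mulVec fun i => R (fun w => ηN w i) z) i =
        ηL z i - ∑ j, T z i j * R (fun w => ηN w j) z := by
    intro z i
    simp [Matrix.mulVec, dotProduct]
  have cg : ∀ i, Continuous fun x =>
      (ηL (embedR n ℓ x) - (T (embedR n ℓ x)).mulVec
        fun i => R (fun w => ηN w i) (embedR n ℓ x)) i := by
    intro i
    simp only [hg_apply]
    exact (cηL i).sub (continuous_finset_sum _ fun j _ => (cT i j).mul (cRN j))
  have hMμ : (averM T).mulVec ξN00 =
      averT fun z => ηL z - (T z).mulVec fun i => R (fun w => ηN w i) z := by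
    rw [hξN00, Matrix.mulVec_mulVec, Matrix.mul_nonsing_inv _ (Ne.isUnit hdet),
      Matrix.one_mulVec]
  -- realness of the averaged matrix and vector
  have hTim : ∀ i j, (averM T i j).im = 0 := fun i j =>
    averT_im_eq_zero ((hT i j).contR hρ) (hT i j).realOnReal
  have hgim : ∀ i,
      ((averT fun z => ηL z - (T z).mulVec fun i => R (fun w => ηN w i) z) i).im = 0 := by
    intro i
    rw [averT_apply cg i]
    refine averT_im_eq_zero (cg i) ?_
    intro z h1 h2
    rw [hg_apply, Complex.sub_im]
    have hs : (∑ j, T z i j * R (fun w => ηN w j) z).im = 0 := by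
      rw [Complex.im_sum]
      refine Finset.sum_eq_zero fun j _ => ?_
      rw [Complex.mul_im, (hT i j).realOnReal z h1 h2,
        (hRNInA2 j).realOnReal z h1 h2]
      ring
    rw [hs, (hηL i).realOnReal z h1 h2]
    ring
  have hξim : ∀ j, (ξN00 j).im = 0 := by
    have hconj : (averM T).mulVec (fun j => (starRingEnd ℂ) (ξN00 j)) =
        (averM T).mulVec ξN00 := by
      funext i
      simp only [Matrix.mulVec, dotProduct]
      calc ∑ j, averM T i j * (starRingEnd ℂ) (ξN00 j)
          = (starRingEnd ℂ) (∑ j, averM T i j * ξN00 j) := by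
            rw [map_sum]
            refine Finset.sum_congr rfl fun j _ => ?_
            rw [RingHom.map_mul, Complex.conj_eq_iff_im.mpr (hTim i j)]
        _ = ∑ j, averM T i j * ξN00 j := by
            have : ((averM T).mulVec ξN00 i).im = 0 := by
              rw [hMμ]; exact hgim i
            simp only [Matrix.mulVec, dotProduct] at this
            exact Complex.conj_eq_iff_im.mpr this
    have hinj := congrArg ((averM T)⁻¹.mulVec) hconj
    rw [Matrix.mulVec_mulVec, Matrix.mulVec_mulVec,
      Matrix.nonsing_inv_mul _ (Ne.isUnit hdet), Matrix.one_mulVec,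
      Matrix.one_mulVec] at hinj
    intro j
    exact Complex.conj_eq_iff_im.mp (congrFun hinj j)
  -- pointwise description of ξN
  have hξN_apply : ∀ (z : Pt n ℓ) (p : Fin n),
      ξN z p = ξN00 p + R (fun w => ηN w p) z := by
    intro z p; rw [hξN]; rfl
  -- bound on ξN
  have hξNnorm : ∀ δ : ℝ, 0 < δ → δ < ρ → ∀ z ∈ TStrip n ℓ (ρ - δ),
      ‖ξN z‖ ≤ ‖ξN00‖ + cR / (γ * δ ^ τ) * normS ρ ηN := by
    intro δ h1 h2 z hz
    rw [hξN]
    exact (norm_add_le _ _).trans (add_le_add le_rfl (hRVnorm δ h1 h2 z hz))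
  have hbddξN : ∀ δ : ℝ, 0 < δ → δ < ρ →
      BddAbove ((fun z => ‖ξN z‖) '' TStrip n ℓ (ρ - δ)) :=
    fun δ h1 h2 => bddAbove_normImg (hξNnorm δ h1 h2)
  -- pointwise description of v = ηL - T ξN
  have hv_apply : ∀ (z : Pt n ℓ) (i : Fin n),
      (ηL z - (T z).mulVec (ξN z)) i =
        ηL z i - ∑ j, T z i j * (ξN00 j + R (fun w => ηN w j) z) := by
    intro z i
    simp only [Matrix.mulVec, dotProduct, Pi.sub_apply]
    congr 1
    exact Finset.sum_congr rfl fun j _ => by rw [hξN_apply]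
  have cv : ∀ i, Continuous fun x =>
      (ηL (embedR n ℓ x) - (T (embedR n ℓ x)).mulVec (ξN (embedR n ℓ x))) i := by
    intro i
    simp only [hv_apply]
    exact (cηL i).sub (continuous_finset_sum _ fun j _ =>
      (cT i j).mul (continuous_const.add (cRN j)))
  -- bound on v
  have hvnorm : ∀ δ : ℝ, 0 < δ → δ < ρ → ∀ z ∈ TStrip n ℓ (ρ - δ),
      ‖ηL z - (T z).mulVec (ξN z)‖ ≤
        normS ρ ηL + normS ρ T * (‖ξN00‖ + cR / (γ * δ ^ τ) * normS ρ ηN) := by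
    intro δ h1 h2 z hz
    have hzρ : z ∈ TStrip n ℓ ρ := TStrip_mono (by linarith) hz
    refine (norm_sub_le _ _).trans (add_le_add (le_normS hbddηL hzρ) ?_)
    refine (Matrix.linfty_opNorm_mulVec _ _).trans ?_
    exact mul_le_mul (le_normS hbddT hzρ) (hξNnorm δ h1 h2 z hz) (norm_nonneg _) h0T
  -- v belongs to A(ρ - δ) componentwise
  have hvInA : ∀ δ : ℝ, 0 < δ → δ < ρ → ∀ i,
      InA n ℓ (ρ - δ) (fun z => (ηL z - (T z).mulVec (ξN z)) i) := by
    intro δ h1 h2 i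
    have hperηL : ∀ (i : Fin n) θ φ (k : Fin n → ℤ) (m : Fin ℓ → ℤ),
        ηL (θ + fun i => (k i : ℂ), φ + fun j => (m j : ℂ)) i = ηL (θ, φ) i :=
      fun i θ φ k m => (hηL i).periodic θ φ k m
    have hperT : ∀ (i j : Fin n) θ φ (k : Fin n → ℤ) (m : Fin ℓ → ℤ),
        T (θ + fun i => (k i : ℂ), φ + fun j => (m j : ℂ)) i j = T (θ, φ) i j :=
      fun i j θ φ k m => (hT i j).periodic θ φ k m
    constructor
    · intro θ φ k m
      simp only [hv_apply]
      rw [hperηL i θ φ k m]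
      congr 1
      refine Finset.sum_congr rfl fun j _ => ?_
      rw [hperT i j θ φ k m, (hRNInA2 j).periodic θ φ k m]
    · have hfe : (fun z => (ηL z - (T z).mulVec (ξN z)) i) =
          fun z => ηL z i - ∑ j, T z i j * (ξN00 j + R (fun w => ηN w j) z) :=
        funext fun z => hv_apply z i
      rw [hfe]
      refine DifferentiableOn.sub ((hηL i).diff.mono (TStrip_mono (by linarith))) ?_
      refine DifferentiableOn.fun_sum fun j _ => ?_
      exact ((hT i j).diff.mono (TStrip_mono (by linarith))).mul
        (((hRNInA δ h1 h2 j).diff).const_add _)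
    · intro z hz1 hz2
      rw [hv_apply, Complex.sub_im]
      have hs : (∑ j, T z i j * (ξN00 j + R (fun w => ηN w j) z)).im = 0 := by
        rw [Complex.im_sum]
        refine Finset.sum_eq_zero fun j _ => ?_
        rw [Complex.mul_im, (hT i j).realOnReal z hz1 hz2, Complex.add_im,
          hξim j, (hRNInA2 j).realOnReal z hz1 hz2]
        ring
      rw [hs, (hηL i).realOnReal z hz1 hz2]
      ring
    · refine bddAbove_normImg (C := normS ρ ηL +
        normS ρ T * (‖ξN00‖ + cR / (γ * δ ^ τ) * normS ρ ηN)) fun z hz => ?_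
      exact (norm_le_pi_norm _ i).trans (hvnorm δ h1 h2 z hz)
  -- averages
  have havgηN : ∀ p, averT (fun z => ηN z p) = 0 := by
    intro p
    rw [← averT_apply cηN p, hηNavg]
    rfl
  have havgv : ∀ i, averT (fun z => (ηL z - (T z).mulVec (ξN z)) i) = 0 := by
    intro i
    have hsplit : (fun z => (ηL z - (T z).mulVec (ξN z)) i) =
        fun z => (ηL z - (T z).mulVec fun i => R (fun w => ηN w i) z) i -
          ∑ j, T z i j * ξN00 j := by
      funext z
      rw [hv_apply, hg_apply]
      simp only [mul_add, Finset.sum_add_distrib]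
      ring
    rw [hsplit]
    have c1 : Continuous fun x =>
        (ηL (embedR n ℓ x) - (T (embedR n ℓ x)).mulVec
          fun i => R (fun w => ηN w i) (embedR n ℓ x)) i := cg i
    have c2 : Continuous fun x => ∑ j, T (embedR n ℓ x) i j * ξN00 j :=
      continuous_finset_sum _ fun j _ => (cT i j).mul continuous_const
    rw [averT_sub' c1 c2]
    rw [averT_finsum (fun j => (cT i j).mul continuous_const)]
    have hterm : ∀ j, averT (fun z => T z i j * ξN00 j) =
        averM T i j * ξN00 j := fun j => averT_mul_const (ξN00 j)
    have hws : ∑ j, averT (fun z => T z i j * ξN00 j) =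
        (averM T).mulVec ξN00 i := by
      simp only [hterm, Matrix.mulVec, dotProduct]
    rw [hws, hMμ]
    rw [averT_apply cg i]
    ring
  -- the equations
  refine ⟨?_, ?_⟩
  · intro z hz
    obtain ⟨δ, hδ0, hδρ, hzδ⟩ := exists_delta_mem hρ hz
    have hδ2 : 0 < δ / 2 := half_pos hδ0
    -- differentiability of the components of ξN at z
    have hdiffξN : ∀ p, DifferentiableAt ℂ (fun w => ξN w p) z := by
      intro p
      have h1 : DifferentiableAt ℂ (R fun w => ηN w p) z :=
        diffAt_of_InA (hRNInA δ hδ0 hδρ p) hzδ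
      have hfe : (fun w => ξN w p) = fun w => ξN00 p + R (fun w => ηN w p) w :=
        funext fun w => hξN_apply w p
      rw [hfe]
      exact (differentiableAt_const _).add h1
    -- second equation
    have heq2 : lieD ω α ξN z = ηN z := by
      funext p
      rw [lieD_apply_pi hdiffξN p]
      have hfe : (fun w => ξN w p) = fun w => ξN00 p + R (fun w => ηN w p) w :=
        funext fun w => hξN_apply w p
      rw [hfe, lieD_const_add, (hRN p).2.2 z hz, havgηN p, sub_zero]
    -- R applied to components of v
    have hvδ2 := fun p => hvInA (δ / 2) hδ2 (by linarith) p
    have hRv := fun p => hR (ρ - δ / 2) (by linarith) (by linarith) _ (hvδ2 p)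
    have hInARv : ∀ p, InA n ℓ (ρ - δ)
        (R fun w => (ηL w - (T w).mulVec (ξN w)) p) := by
      intro p
      have h := ((hRv p).2.1 (δ / 2) hδ2 (by linarith)).1
      rwa [show ρ - δ / 2 - δ / 2 = ρ - δ by ring] at h
    have hξL_apply : ∀ (w : Pt n ℓ) (p : Fin n), ξL w p =
        ξL00 p + R (fun w => (ηL w - (T w).mulVec (ξN w)) p) w := by
      intro w p; rw [hξL]; rfl
    have hdiffξL : ∀ p, DifferentiableAt ℂ (fun w => ξL w p) z := by
      intro p
      have hfe : (fun w => ξL w p) =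
          fun w => ξL00 p + R (fun w => (ηL w - (T w).mulVec (ξN w)) p) w :=
        funext fun w => hξL_apply w p
      rw [hfe]
      exact (differentiableAt_const _).add (diffAt_of_InA (hInARv p) hzδ)
    have heq1 : (T z).mulVec (ξN z) + lieD ω α ξL z = ηL z := by
      funext p
      have hl : lieD ω α ξL z p =
          (ηL z - (T z).mulVec (ξN z)) p := by
        rw [lieD_apply_pi hdiffξL p]
        have hfe : (fun w => ξL w p) =
            fun w => ξL00 p + R (fun w => (ηL w - (T w).mulVec (ξN w)) p) w :=
          funext fun w => hξL_apply w p
        rw [hfe, lieD_const_add,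
          (hRv p).2.2 z (TStrip_mono (by linarith) hzδ), havgv p, sub_zero]
      have : ((T z).mulVec (ξN z) + lieD ω α ξL z) p =
          (T z).mulVec (ξN z) p + lieD ω α ξL z p := rfl
      rw [this, hl, Pi.sub_apply]
      ring
    exact ⟨heq1, heq2⟩
  · intro δ hδ h2δ
    have hδρ : δ < ρ := by linarith
    have hρδ : 0 < ρ - δ := by linarith
    have hρ2δ : 0 < ρ - 2 * δ := by linarith
    have hD := hpos δ hδ
    have hcRD : 0 ≤ cR / (γ * δ ^ τ) := div_nonneg hcR.le hD.le
    -- first estimate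
    have est1 : ‖ξN00‖ ≤ ‖(averM T)⁻¹‖ *
        (normS ρ ηL + cR / (γ * δ ^ τ) * normS ρ T * normS ρ ηN) := by
      rw [hξN00]
      refine (Matrix.linfty_opNorm_mulVec _ _).trans ?_
      have hw : ‖averT fun z => ηL z - (T z).mulVec
          fun i => R (fun w => ηN w i) z‖ ≤
          normS ρ ηL + cR / (γ * δ ^ τ) * normS ρ T * normS ρ ηN := by
        refine norm_averT_le fun x => ?_
        have hx : embedR n ℓ x ∈ TStrip n ℓ (ρ - δ) := embedR_mem hρδ x
        have hxρ : embedR n ℓ x ∈ TStrip n ℓ ρ := TStrip_mono (by linarith) hx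
        refine (norm_sub_le _ _).trans ?_
        have h1 : ‖ηL (embedR n ℓ x)‖ ≤ normS ρ ηL := le_normS hbddηL hxρ
        have h2 : ‖(T (embedR n ℓ x)).mulVec
            fun i => R (fun w => ηN w i) (embedR n ℓ x)‖ ≤
            normS ρ T * (cR / (γ * δ ^ τ) * normS ρ ηN) := by
          refine (Matrix.linfty_opNorm_mulVec _ _).trans ?_
          exact mul_le_mul (le_normS hbddT hxρ)
            (hRVnorm δ hδ hδρ _ hx) (norm_nonneg _) h0T
        calc ‖ηL (embedR n ℓ x)‖ + ‖(T (embedR n ℓ x)).mulVec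
              fun i => R (fun w => ηN w i) (embedR n ℓ x)‖
            ≤ normS ρ ηL + normS ρ T * (cR / (γ * δ ^ τ) * normS ρ ηN) :=
              add_le_add h1 h2
          _ = normS ρ ηL + cR / (γ * δ ^ τ) * normS ρ T * normS ρ ηN := by ring
      exact mul_le_mul_of_nonneg_left hw (norm_nonneg _)
    -- second estimate
    have est2 : normS (ρ - δ) ξN ≤ ‖ξN00‖ + cR / (γ * δ ^ τ) * normS ρ ηN :=
      normS_le hρδ (hξNnorm δ hδ hδρ)
    -- third estimate
    have hbddηLδ : BddAbove ((fun z => ‖ηL z‖) '' TStrip n ℓ (ρ - δ)) :=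
      hbddηL.mono (Set.image_mono (TStrip_mono (by linarith)))
    have h0ηLδ : 0 ≤ normS (ρ - δ) ηL := normS_nonneg hρδ hbddηLδ
    have hbddξNδ := hbddξN δ hδ hδρ
    have h0ξNδ : 0 ≤ normS (ρ - δ) ξN := normS_nonneg hρδ hbddξNδ
    have hbddvδ : BddAbove ((fun z => ‖ηL z - (T z).mulVec (ξN z)‖) ''
        TStrip n ℓ (ρ - δ)) := bddAbove_normImg (hvnorm δ hδ hδρ)
    have hvS : normS (ρ - δ) (fun z => ηL z - (T z).mulVec (ξN z)) ≤
        normS (ρ - δ) ηL + normS ρ T * normS (ρ - δ) ξN := by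
      refine normS_le hρδ fun z hz => ?_
      refine (norm_sub_le _ _).trans (add_le_add (le_normS hbddηLδ hz) ?_)
      refine (Matrix.linfty_opNorm_mulVec _ _).trans ?_
      exact mul_le_mul (le_normS hbddT (TStrip_mono (by linarith) hz))
        (le_normS hbddξNδ hz) (norm_nonneg _) h0T
    have hvA := fun p => hvInA δ hδ hδρ p
    have hRv := fun p => hR (ρ - δ) hρδ (by linarith) _ (hvA p)
    have est3 : normS (ρ - 2 * δ) ξL ≤ ‖ξL00‖ + cR / (γ * δ ^ τ) *
        (normS (ρ - δ) ηL + normS ρ T * normS (ρ - δ) ξN) := by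
      refine normS_le hρ2δ fun z hz => ?_
      have hzz : z ∈ TStrip n ℓ (ρ - δ - δ) := by
        rwa [show ρ - δ - δ = ρ - 2 * δ by ring]
      have hRvz : ‖(fun p => R (fun w => (ηL w - (T w).mulVec (ξN w)) p) z :
          Fin n → ℂ)‖ ≤ cR / (γ * δ ^ τ) *
          (normS (ρ - δ) ηL + normS ρ T * normS (ρ - δ) ξN) := by
        refine pinorm_le _ (mul_nonneg hcRD (by positivity)) fun p => ?_
        have hb := ((hRv p).2.1 δ hδ (by linarith)).2
        have hbA := ((hRv p).2.1 δ hδ (by linarith)).1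
        calc ‖R (fun w => (ηL w - (T w).mulVec (ξN w)) p) z‖
            ≤ normS (ρ - δ - δ) (R fun w => (ηL w - (T w).mulVec (ξN w)) p) :=
              le_normS hbA.bdd hzz
          _ ≤ cR * normS (ρ - δ) (fun w => (ηL w - (T w).mulVec (ξN w)) p) /
              (γ * δ ^ τ) := hb
          _ ≤ cR / (γ * δ ^ τ) *
              (normS (ρ - δ) ηL + normS ρ T * normS (ρ - δ) ξN) := by
              rw [div_mul_eq_mul_div]
              gcongr
              exact (normS_comp_le hρδ hbddvδ p).trans hvS
      have hξLz : ξL z = ξL00 +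
          fun p => R (fun w => (ηL w - (T w).mulVec (ξN w)) p) z := by
        rw [hξL]
      rw [hξLz]
      exact (norm_add_le _ _).trans (add_le_add le_rfl hRvz)
    exact ⟨est1, est2, est3⟩







end Key

/-- **Upper triangular cohomological equations** (Lemma 5.1).
Given `(ω,α) ∈ D(γ,τ)`, data `η = (ηᴸ, ηᴺ)` and `T` with components in `A(ρ)`,
`det⟨T⟩ ≠ 0`, `⟨ηᴺ⟩ = 0`, and the small-divisor solution operator `R = R_{ω,α}`,
the system `Tξᴺ + ℒ_{ω,α}ξᴸ = ηᴸ`, `ℒ_{ω,α}ξᴺ = ηᴺ` has the solution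
`ξᴺ = ξᴺ₀₀ + R(ηᴺ)`, `ξᴸ = ξᴸ₀₀ + R(ηᴸ - Tξᴺ)` with
`ξᴺ₀₀ = ⟨T⟩⁻¹⟨ηᴸ - T·R(ηᴺ)⟩`, and the stated estimates hold. -/
theorem upper_triangular_cohomological_equations
    (n ℓ : ℕ) (ρ γ τ cR : ℝ) (hρ : 0 < ρ) (hγ : 0 < γ)
    (hτ : (n : ℝ) + (ℓ : ℝ) - 1 ≤ τ) (hcR : 0 < cR)
    (ω : Fin n → ℝ) (α : Fin ℓ → ℝ) (hDioph : DiophFreq γ τ ω α)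
    (ηL ηN : Pt n ℓ → (Fin n → ℂ))
    (hηL : ∀ i, InA n ℓ ρ (fun z => ηL z i))
    (hηN : ∀ i, InA n ℓ ρ (fun z => ηN z i))
    (T : Pt n ℓ → Matrix (Fin n) (Fin n) ℂ)
    (hT : ∀ i j, InA n ℓ ρ (fun z => T z i j))
    (hdet : (averM T).det ≠ 0)
    (hηNavg : averT ηN = 0)
    -- `R` is the zero-average small-divisor solution operator `R_{ω,α}`,
    -- with Rüssmann constant `cR`:
    (R : (Pt n ℓ → ℂ) → (Pt n ℓ → ℂ))
    (hR : ∀ ρ' : ℝ, 0 < ρ' → ρ' ≤ ρ → ∀ v : Pt n ℓ → ℂ, InA n ℓ ρ' v →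
      averT (R v) = 0 ∧
      (∀ δ : ℝ, 0 < δ → δ < ρ' →
        InA n ℓ (ρ' - δ) (R v) ∧
        normS (ρ' - δ) (R v) ≤ cR * normS ρ' v / (γ * δ ^ τ)) ∧
      (∀ z ∈ TStrip n ℓ ρ', lieD ω α (R v) z = v z - averT v))
    (ξL00 : Fin n → ℂ) :
    let RV : (Pt n ℓ → (Fin n → ℂ)) → Pt n ℓ → (Fin n → ℂ) :=
      fun v z i => R (fun w => v w i) z
    let ξN00 : Fin n → ℂ :=
      (averM T)⁻¹.mulVec (averT (fun z => ηL z - (T z).mulVec (RV ηN z)))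
    let ξN : Pt n ℓ → (Fin n → ℂ) := fun z => ξN00 + RV ηN z
    let ξL : Pt n ℓ → (Fin n → ℂ) :=
      fun z => ξL00 + RV (fun w => ηL w - (T w).mulVec (ξN w)) z
    (∀ z ∈ TStrip n ℓ ρ,
        (T z).mulVec (ξN z) + lieD ω α ξL z = ηL z ∧
        lieD ω α ξN z = ηN z) ∧
    (∀ δ : ℝ, 0 < δ → 2 * δ < ρ →
        ‖ξN00‖ ≤ ‖(averM T)⁻¹‖ *
            (normS ρ ηL + cR / (γ * δ ^ τ) * normS ρ T * normS ρ ηN) ∧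
        normS (ρ - δ) ξN ≤ ‖ξN00‖ + cR / (γ * δ ^ τ) * normS ρ ηN ∧
        normS (ρ - 2 * δ) ξL ≤ ‖ξL00‖ +
            cR / (γ * δ ^ τ) *
              (normS (ρ - δ) ηL + normS ρ T * normS (ρ - δ) ξN)) := by
  intro RV ξN00 ξN ξL
  exact key_cohom n ℓ ρ γ τ cR hρ hγ hcR ω α ηL ηN hηL hηN T hT hdet hηNavg R hR ξL00
    ξN00 rfl ξN rfl ξL rfl

end
end
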